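/- arXiv:2404.08983 — 5 statements merged into one kernel-verified Lean document; each statement's English description precedes it below -/
import Mathlib

section
/- In a quasi-order (P, ≤), if κ is a regular uncountable cardinal and C ⊆ P is a κ-chain (the image of an order-preserving bijection from κ) that is unbounded in P, then there exists a subset C' ⊆ C of cardinality κ that is a chain with respect to the strict order < (where a < b iff a ≤ b and not b ≤ a). -/
/-!
Along the κ-chain, keep only the indices where `σ` rises strictly above all earlier values: their
images are pairwise `<`-comparable. Unboundedness makes these records cofinal in κ, and by regularity
every cofinal subset of κ has size κ.
-/

open Cardinal Set

def strictRecords {α P : Type*} [LT α] [LE P] (f : α → P) : Set α :=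
  {a | ∀ b < a, ¬ f a ≤ f b}

theorem Cardinal.IsRegular.mk_eq_of_isCofinal {κ : Cardinal} (hκ : κ.IsRegular)
    {s : Set κ.ord.ToType} (hs : IsCofinal s) : #s = κ := by
  refine le_antisymm ?_ ?_
  · simpa using mk_set_le s
  · calc κ ≤ κ.ord.cof := hκ.le_cof_ord
      _ = Order.cof κ.ord.ToType := (Ordinal.cof_toType _).symm
      _ ≤ #s := Order.cof_le hs

namespace Monotone

variable {α P : Type*} [LinearOrder α] [Preorder P] {f : α → P}

theorem isChain_image_strictRecords (hf : Monotone f) :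
    IsChain (· < ·) (f '' strictRecords f) := by
  rintro _ ⟨a, ha, rfl⟩ _ ⟨b, hb, rfl⟩ hne
  rcases lt_or_gt_of_ne (ne_of_apply_ne f hne) with hab | hba
  · exact Or.inl (lt_iff_le_not_ge.2 ⟨hf hab.le, hb a hab⟩)
  · exact Or.inr (lt_iff_le_not_ge.2 ⟨hf hba.le, ha b hba⟩)

/-- Given `b`, the least `a` with `f a ≰ f b` is a strict record beyond `b`. -/
theorem isCofinal_strictRecords [WellFoundedLT α] (hf : Monotone f)
    (hunb : ¬ BddAbove (range f)) : IsCofinal (strictRecords f) := by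
  intro b
  have hex : ∃ a, ¬ f a ≤ f b := by
    by_contra! h
    exact hunb ⟨f b, forall_mem_range.2 h⟩
  obtain ⟨a, hab, hmin⟩ := wellFounded_lt.has_min {a | ¬ f a ≤ f b} hex
  refine ⟨a, fun d hda hle => hab (hle.trans ?_), ?_⟩
  · by_contra hdb
    exact hmin d hdb hda
  · by_contra! hba
    exact hab (hf hba.le)

end Monotone

theorem stmt0_general {P : Type*} [Preorder P] (κ : Cardinal) (hreg : κ.IsRegular)
    (C : Set P)
    (σ : κ.ord.ToType → P) (hmono : Monotone σ) (hinj : Function.Injective σ)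
    (hrange : Set.range σ = C)
    (hunb : ¬ ∃ b : P, ∀ c ∈ C, c ≤ b) :
    ∃ C' ⊆ C, Cardinal.mk C' = κ ∧ IsChain (· < ·) (C' : Set P) := by
  subst hrange
  refine ⟨σ '' strictRecords σ, image_subset_range _ _, ?_, hmono.isChain_image_strictRecords⟩
  rw [mk_image_eq hinj]
  exact hreg.mk_eq_of_isCofinal (hmono.isCofinal_strictRecords hunb)

/-- In a quasi-order (P, ≤), if κ is a regular uncountable cardinal and
C ⊆ P is a κ-chain (image of an order-preserving bijection from κ) unbounded in P,
then there is C' ⊆ C of cardinality κ that is a chain for the strict order `<`. -/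
theorem stmt0 {P : Type*} [Preorder P] (κ : Cardinal) (hreg : κ.IsRegular)
    (hunc : Cardinal.aleph0 < κ) (C : Set P)
    (σ : κ.ord.ToType → P) (hmono : Monotone σ) (hinj : Function.Injective σ)
    (hrange : Set.range σ = C)
    (hunb : ¬ ∃ b : P, ∀ c ∈ C, c ≤ b) :
    ∃ C' ⊆ C, Cardinal.mk C' = κ ∧ IsChain (· < ·) (C' : Set P) :=
  stmt0_general κ hreg C σ hmono hinj hrange hunb
end

section
/- Let n ≥ 0 and let (P, ≤) be a quasi-order with cofinality ℵ_{n+1} containing an ω_{n+1}-chain C unbounded in P, equipped with a binary function d : P × P → P such that d(x,y) ≥ x and d(x,y) ≥ y, and d(x',y') ≤ d(x,y) whenever x' ≤ x and y' ≤ y. Then P is a continuous increasing union P = ⋃_{α<ω_{n+1}} P_α and there exists C' ⊆ C cofinal in C such that each P_α is d-closed, downward closed, has cofinality at most ℵ_n, the order type of P_α ∩ C' is α, and P_λ ∩ C' is unbounded in P_λ for every limit λ. -/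
/-!
Enumerate a cofinal subset of `P` as `(f β)_{β < ω_{n+1}}` and re-index the chain `C` as
`(c j)_{j < ω_{n+1}}`. By transfinite recursion let `g α` be the least `j` such that `c j` lies
outside `P_α`, the downward closure of the `d`-closure of `{c (g β), f β | β < α}`. Fewer than
`ℵ_{n+1}` points generate `P_α`, so its `d`-closure is a cofinal subset of size `≤ ℵ_n`; by
regularity of `ℵ_{n+1}` such a set cannot dominate the chain, hence `g α` exists. Monotonicity of
`d` makes `P_α` `d`-closed. With `C' = {c (g β)}` one has `c (g β) ∈ P_α ↔ β < α`, which gives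
the order type of `P_α ∩ C'` and its unboundedness at limits, and `P_λ = ⋃_{α<λ} P_α` because both
closures are finitary.
-/

open Cardinal Set

universe u v w

theorem lift_mk_image_Iio_le {X : Type u} (F : Ordinal.{w} → X) (α : Ordinal.{w}) :
    lift.{w} #(F '' Iio α) ≤ lift.{u} α.card := by
  have := mk_image_le_lift (f := F) (s := Iio α)
  rw [Cardinal.mk_Iio_ordinal, lift_lift] at this
  rw [← lift_le.{w+1}, lift_lift, lift_lift]
  exact this

theorem exists_image_eq_range_of_equiv {α ι P : Type*} [Nonempty P] {s : Set α} (e : s ≃ ι)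
    (σ : ι → P) : ∃ c : α → P, c '' s = range σ ∧ ∀ a : s, c a = σ (e a) := by
  refine ⟨Function.extend Subtype.val (σ ∘ e) fun _ => Classical.arbitrary P, ?_,
    Subtype.val_injective.extend_apply _ _⟩
  rw [image_eq_range]
  simp only [Subtype.val_injective.extend_apply]
  exact e.surjective.range_comp σ

theorem Ordinal.exists_monotoneOn_image_Iio_eq_range {P : Type u} [Preorder P] [Nonempty P]
    {o : Ordinal.{v}} {o' : Ordinal.{w}} (h : Ordinal.lift.{w} o = Ordinal.lift.{v} o')
    {σ : o.ToType → P} (hσ : Monotone σ) :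
    ∃ c : Ordinal.{w} → P, c '' Iio o' = range σ ∧ MonotoneOn c (Iio o') := by
  obtain ⟨r⟩ := Ordinal.lift_type_eq.{w, v, 0}.1 (by rw [type_toType, type_toType, h] :
    Ordinal.lift (@Ordinal.type o'.ToType (· < ·) _) =
      Ordinal.lift (@Ordinal.type o.ToType (· < ·) _))
  let e : Iio o' ≃o o.ToType := Ordinal.ToType.mk.trans (OrderIso.ofRelIsoLT r)
  obtain ⟨c, hc, hce⟩ := exists_image_eq_range_of_equiv e.toEquiv σ
  refine ⟨c, hc, fun β hβ γ hγ hle => ?_⟩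
  rw [hce ⟨β, hβ⟩, hce ⟨γ, hγ⟩]
  exact hσ (e.monotone hle)

theorem exists_image_Iio_ord_eq {P : Type u} [Nonempty P] {κ : Cardinal.{w}} {D : Set P}
    (h : lift.{w} #D = lift.{u} κ) : ∃ f : Ordinal.{w} → P, f '' Iio κ.ord = D := by
  obtain ⟨E⟩ : Nonempty (Iio κ.ord ≃ D) := lift_mk_eq'.1 (by
    have := congrArg lift.{w + 1} h
    rw [lift_lift, lift_lift] at this
    rw [Cardinal.mk_Iio_ordinal, card_ord, lift_lift, this])
  obtain ⟨f, hf, -⟩ := exists_image_eq_range_of_equiv E Subtype.val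
  exact ⟨f, hf.trans Subtype.range_coe⟩

section DClosure

variable {P : Type u} (d : P → P → P)

def dClosureStep (S : Set P) : Set P := S ∪ image2 d S S

def dClosure (S : Set P) : Set P := ⋃ k : ℕ, (dClosureStep d)^[k] S

variable {d}

theorem dClosureStep_mono : Monotone (dClosureStep d) :=
  fun _ _ h => union_subset_union h (image2_subset h h)

theorem monotone_iterate_dClosureStep (S : Set P) :
    Monotone fun k => (dClosureStep d)^[k] S :=
  monotone_nat_of_le_succ fun k => by
    rw [Function.iterate_succ_apply']
    exact subset_union_left

theorem subset_dClosure (S : Set P) : S ⊆ dClosure d S :=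
  subset_iUnion (fun k => (dClosureStep d)^[k] S) 0

theorem dClosure_mono : Monotone (dClosure d) :=
  fun _ _ h => iUnion_mono fun k => dClosureStep_mono.iterate k h

theorem d_mem_dClosure {S : Set P} {x y : P} (hx : x ∈ dClosure d S) (hy : y ∈ dClosure d S) :
    d x y ∈ dClosure d S := by
  obtain ⟨k, hk⟩ := mem_iUnion.1 hx
  obtain ⟨l, hl⟩ := mem_iUnion.1 hy
  refine mem_iUnion.2 ⟨max k l + 1, ?_⟩
  rw [Function.iterate_succ_apply']
  exact Or.inr (mem_image2_of_mem (monotone_iterate_dClosureStep S (le_max_left k l) hk)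
    (monotone_iterate_dClosureStep S (le_max_right k l) hl))

theorem dClosure_subset {S T : Set P} (hST : S ⊆ T) (hT : ∀ x ∈ T, ∀ y ∈ T, d x y ∈ T) :
    dClosure d S ⊆ T := by
  refine iUnion_subset fun k => ?_
  induction k with
  | zero => exact hST
  | succ k ih =>
    rw [Function.iterate_succ_apply']
    rintro x (hx | ⟨a, ha, b, hb, rfl⟩)
    exacts [ih hx, hT a (ih ha) b (ih hb)]

theorem dClosure_iUnion_subset {ι : Type*} {A : ι → Set P} (hA : Directed (· ⊆ ·) A) :
    dClosure d (⋃ i, A i) ⊆ ⋃ i, dClosure d (A i) := by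
  refine dClosure_subset (iUnion_mono fun i => subset_dClosure (A i)) ?_
  simp only [mem_iUnion]
  rintro x ⟨i, hx⟩ y ⟨j, hy⟩
  obtain ⟨k, hik, hjk⟩ := hA i j
  exact ⟨k, d_mem_dClosure (dClosure_mono hik hx) (dClosure_mono hjk hy)⟩

theorem mk_dClosure_le (S : Set P) : #(dClosure d S) ≤ max ℵ₀ #S := by
  have hκ : ℵ₀ ≤ max ℵ₀ #S := le_max_left _ _
  have hstage : ∀ k, #((dClosureStep d)^[k] S) ≤ max ℵ₀ #S := by
    intro k
    induction k with
    | zero => exact le_max_right _ _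
    | succ k ih =>
      rw [Function.iterate_succ_apply']
      calc #(dClosureStep d ((dClosureStep d)^[k] S))
          ≤ max ℵ₀ #S + max ℵ₀ #S * max ℵ₀ #S :=
            (mk_union_le _ _).trans (add_le_add ih (mk_image2_le.trans (mul_le_mul' ih ih)))
        _ = max ℵ₀ #S := by rw [mul_eq_self hκ, add_eq_self hκ]
  calc #(dClosure d S) ≤ ℵ₀ * ⨆ k, #((dClosureStep d)^[k] S) := by
        simpa [dClosure] using mk_iUnion_le_lift fun k => (dClosureStep d)^[k] S
    _ ≤ max ℵ₀ #S * max ℵ₀ #S := mul_le_mul' hκ (ciSup_le' hstage)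
    _ = max ℵ₀ #S := mul_eq_self hκ

end DClosure

theorem d_mem_lowerClosure_dClosure {P : Type u} [Preorder P] {d : P → P → P}
    (hd : ∀ x x' y y' : P, x' ≤ x → y' ≤ y → d x' y' ≤ d x y) {S : Set P} {x y : P}
    (hx : x ∈ lowerClosure (dClosure d S)) (hy : y ∈ lowerClosure (dClosure d S)) :
    d x y ∈ lowerClosure (dClosure d S) := by
  obtain ⟨a, ha, hxa⟩ := hx
  obtain ⟨b, hb, hyb⟩ := hy
  exact ⟨d a b, d_mem_dClosure ha hb, hd a x b y hxa hyb⟩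

section Generators

variable {P : Type u} (c f : Ordinal.{w} → P) (g : Ordinal.{w} → Ordinal.{w})

def generators (α : Ordinal.{w}) : Set P := (c ∘ g) '' Iio α ∪ f '' Iio α

variable {c f}

theorem generators_mono : Monotone (generators c f g) :=
  fun _ _ h => union_subset_union (image_mono (Iio_subset_Iio h)) (image_mono (Iio_subset_Iio h))

theorem generators_subset_iUnion {α : Ordinal.{w}} (hα : Order.IsSuccLimit α) :
    generators c f g α ⊆ ⋃ β : Iio α, generators c f g β := by
  rintro x (⟨γ, hγ, rfl⟩ | ⟨γ, hγ, rfl⟩) <;>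
    refine mem_iUnion.2 ⟨⟨Order.succ γ, hα.succ_lt hγ⟩, ?_⟩
  exacts [Or.inl ⟨γ, Order.lt_succ γ, rfl⟩, Or.inr ⟨γ, Order.lt_succ γ, rfl⟩]

theorem lift_mk_generators_lt {κ : Cardinal.{w}} (hκ : ℵ₀ ≤ κ) {α : Ordinal.{w}}
    (hα : α < κ.ord) : lift.{w} #(generators c f g α) < lift.{u} κ := by
  have himage : ∀ F : Ordinal.{w} → P, lift.{w} #(F '' Iio α) < lift.{u} κ :=
    fun F => (lift_mk_image_Iio_le F α).trans_lt (lift_lt.2 (lt_ord.1 hα))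
  refine (lift_le.2 (mk_union_le _ _)).trans_lt ?_
  rw [lift_add]
  exact add_lt_of_lt (by simpa using hκ) (himage _) (himage _)

theorem lift_mk_dClosure_generators_lt (d : P → P → P) {κ : Cardinal.{w}} (hκ : ℵ₀ < κ)
    {α : Ordinal.{w}} (hα : α < κ.ord) :
    lift.{w} #(dClosure d (generators c f g α)) < lift.{u} κ := by
  refine (lift_le.2 (mk_dClosure_le _)).trans_lt ?_
  rw [lift_max]
  exact max_lt (by simpa using hκ) (lift_mk_generators_lt g hκ.le hα)

end Generators

section Stage

variable {P : Type u} [Preorder P] (d : P → P → P) (Θ : Ordinal.{w}) (c f : Ordinal.{w} → P)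

noncomputable def chainIndex : Ordinal.{w} → Ordinal.{w} :=
  Ordinal.lt_wf.fix fun α IH => sInf {j | j < Θ ∧ c j ∉ lowerClosure
    (dClosure d ({x | ∃ β, ∃ h : β < α, c (IH β h) = x} ∪ f '' Iio α))}

def stage (α : Ordinal.{w}) : Set P :=
  lowerClosure (dClosure d (generators c f (chainIndex d Θ c f) α))

theorem chainIndex_eq (α : Ordinal.{w}) :
    chainIndex d Θ c f α = sInf {j | j < Θ ∧ c j ∉ stage d Θ c f α} := by
  rw [chainIndex, WellFounded.fix_eq]
  simp only [stage, generators, exists_prop]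
  rfl

variable {d Θ c f}

theorem stage_mono : Monotone (stage d Θ c f) :=
  fun _ _ h => lowerClosure_mono (dClosure_mono (generators_mono _ h))

theorem chain_mem_stage {β α : Ordinal.{w}} (h : β < α) :
    c (chainIndex d Θ c f β) ∈ stage d Θ c f α :=
  subset_lowerClosure (subset_dClosure _ (Or.inl ⟨β, h, rfl⟩))

theorem stage_eq_iUnion {α : Ordinal.{w}} (hα : Order.IsSuccLimit α) :
    stage d Θ c f α = ⋃ β < α, stage d Θ c f β := by
  refine subset_antisymm ?_ (iUnion₂_subset fun β hβ => stage_mono hβ.le)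
  rintro x ⟨y, hy, hxy⟩
  have hdir : Directed (· ⊆ ·) fun β : Iio α => generators c f (chainIndex d Θ c f) β :=
    Monotone.directed_le fun _ _ h => generators_mono _ h
  obtain ⟨⟨β, hβ⟩, hyβ⟩ := mem_iUnion.1
    (dClosure_iUnion_subset hdir (dClosure_mono (generators_subset_iUnion _ hα) hy))
  exact mem_iUnion₂.2 ⟨β, hβ, y, hyβ, hxy⟩

theorem isLowerSet_stage (α : Ordinal.{w}) : IsLowerSet (stage d Θ c f α) :=
  (lowerClosure _).lower

theorem iUnion_stage_eq_univ (hΘ : Order.IsSuccLimit Θ) (hf : ∀ x, ∃ j < Θ, x ≤ f j) :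
    ⋃ α < Θ, stage d Θ c f α = Set.univ := by
  refine eq_univ_of_forall fun x => ?_
  obtain ⟨j, hj, hxj⟩ := hf x
  exact mem_iUnion₂.2 ⟨Order.succ j, hΘ.succ_lt hj,
    f j, subset_dClosure _ (Or.inr ⟨j, Order.lt_succ j, rfl⟩), hxj⟩

end Stage

section ChainIndex

variable {P : Type u} [Preorder P] {d : P → P → P} {κ : Cardinal.{w}} {c f : Ordinal.{w} → P}

structure IsUnboundedChain (κ : Cardinal.{w}) (c : Ordinal.{w} → P) : Prop where
  monotoneOn : MonotoneOn c (Iio κ.ord)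
  exists_not_le : ∀ y, ∃ j < κ.ord, ¬ c j ≤ y

/-- By regularity of `κ`, the indices at which the chain escapes each element of `S` are bounded
below `κ.ord`. -/
theorem IsUnboundedChain.exists_not_mem_lowerClosure (hκ : κ.IsRegular)
    (hc : IsUnboundedChain κ c) {S : Set P} (hS : lift.{w} #S < lift.{u} κ) :
    ∃ j < κ.ord, c j ∉ lowerClosure S := by
  choose b hbκ hb using hc.exists_not_le
  have hsup : ⨆ y : S, b y < κ.ord :=
    Ordinal.lift_iSup_lt_of_lt_cof (by rwa [← Ordinal.lift_cof, hκ.cof_ord]) fun y => hbκ y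
  have hbdd : BddAbove (range fun y : S => b y) := ⟨κ.ord, by
    rintro _ ⟨y, rfl⟩
    exact (hbκ y).le⟩
  refine ⟨_, hsup, fun ⟨y, hy, hle⟩ => hb y ?_⟩
  exact (hc.monotoneOn (hbκ y) hsup (le_ciSup hbdd ⟨y, hy⟩)).trans hle

theorem chainIndex_spec (hκ : κ.IsRegular) (hκ₀ : ℵ₀ < κ) (hc : IsUnboundedChain κ c)
    {α : Ordinal.{w}} (hα : α < κ.ord) :
    chainIndex d κ.ord c f α < κ.ord ∧ c (chainIndex d κ.ord c f α) ∉ stage d κ.ord c f α := by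
  obtain ⟨j, hj, hjS⟩ :=
    hc.exists_not_mem_lowerClosure hκ (lift_mk_dClosure_generators_lt _ d hκ₀ hα)
  rw [chainIndex_eq]
  exact csInf_mem (s := {j | j < κ.ord ∧ c j ∉ stage d κ.ord c f α}) ⟨j, hj, hjS⟩

theorem chain_mem_stage_iff (hκ : κ.IsRegular) (hκ₀ : ℵ₀ < κ) (hc : IsUnboundedChain κ c)
    {α β : Ordinal.{w}} (hβ : β < κ.ord) :
    c (chainIndex d κ.ord c f β) ∈ stage d κ.ord c f α ↔ β < α :=
  ⟨fun h => lt_of_not_ge fun hαβ => (chainIndex_spec hκ hκ₀ hc hβ).2 (stage_mono hαβ h),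
    chain_mem_stage⟩

theorem strictMonoOn_chainIndex (hκ : κ.IsRegular) (hκ₀ : ℵ₀ < κ) (hc : IsUnboundedChain κ c) :
    StrictMonoOn (chainIndex d κ.ord c f) (Iio κ.ord) := by
  intro β hβ α hα hβα
  by_contra! hle
  exact (chainIndex_spec hκ hκ₀ hc hα).2 (isLowerSet_stage α
    (hc.monotoneOn (chainIndex_spec hκ hκ₀ hc hα).1 (chainIndex_spec hκ hκ₀ hc hβ).1 hle)
    (chain_mem_stage hβα))

theorem chain_le_chain_iff (hκ : κ.IsRegular) (hκ₀ : ℵ₀ < κ) (hc : IsUnboundedChain κ c)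
    {β γ : Ordinal.{w}} (hβ : β < κ.ord) (hγ : γ < κ.ord) :
    c (chainIndex d κ.ord c f β) ≤ c (chainIndex d κ.ord c f γ) ↔ β ≤ γ := by
  refine ⟨fun h => le_of_not_gt fun hγβ => ?_, fun h => ?_⟩
  · exact (chainIndex_spec hκ hκ₀ hc hβ).2 (isLowerSet_stage β h (chain_mem_stage hγβ))
  · exact hc.monotoneOn (chainIndex_spec hκ hκ₀ hc hβ).1 (chainIndex_spec hκ hκ₀ hc hγ).1
      ((strictMonoOn_chainIndex hκ hκ₀ hc).monotoneOn hβ hγ h)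

theorem le_chainIndex (hκ : κ.IsRegular) (hκ₀ : ℵ₀ < κ) (hc : IsUnboundedChain κ c)
    {α : Ordinal.{w}} (hα : α < κ.ord) : α ≤ chainIndex d κ.ord c f α := by
  induction α using WellFoundedLT.induction with
  | _ α ih =>
    by_contra! hlt
    exact (ih _ hlt (hlt.trans hα)).not_gt
      (strictMonoOn_chainIndex hκ hκ₀ hc (chainIndex_spec hκ hκ₀ hc hα).1 hα hlt)

theorem stage_inter_image_chainIndex (hκ : κ.IsRegular) (hκ₀ : ℵ₀ < κ)
    (hc : IsUnboundedChain κ c) {α : Ordinal.{w}} (hα : α ≤ κ.ord) :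
    stage d κ.ord c f α ∩ (c ∘ chainIndex d κ.ord c f) '' Iio κ.ord =
      (c ∘ chainIndex d κ.ord c f) '' Iio α := by
  ext x
  constructor
  · rintro ⟨hx, β, hβ, rfl⟩
    exact ⟨β, (chain_mem_stage_iff hκ hκ₀ hc hβ).1 hx, rfl⟩
  · rintro ⟨β, hβ, rfl⟩
    exact ⟨chain_mem_stage hβ, β, hβ.trans_le hα, rfl⟩

theorem exists_orderEmbedding_range_eq (hκ : κ.IsRegular) (hκ₀ : ℵ₀ < κ)
    (hc : IsUnboundedChain κ c) {α : Ordinal.{w}} (hα : α ≤ κ.ord) :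
    ∃ e : α.ToType ↪o P,
      range e = stage d κ.ord c f α ∩ (c ∘ chainIndex d κ.ord c f) '' Iio κ.ord := by
  have hlt (t : α.ToType) : (Ordinal.ToType.mk.symm t : Ordinal) < κ.ord :=
    (Ordinal.ToType.mk.symm t).2.trans_le hα
  refine ⟨.ofMapLEIff (fun t => c (chainIndex d κ.ord c f (Ordinal.ToType.mk.symm t)))
    fun s t => (chain_le_chain_iff hκ hκ₀ hc (hlt s) (hlt t)).trans
      (Subtype.coe_le_coe.trans (OrderIso.le_iff_le _)), ?_⟩
  rw [stage_inter_image_chainIndex hκ hκ₀ hc hα]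
  ext x
  constructor
  · rintro ⟨t, rfl⟩
    exact ⟨_, (Ordinal.ToType.mk.symm t).2, rfl⟩
  · rintro ⟨β, hβ, rfl⟩
    exact ⟨Ordinal.ToType.mk ⟨β, hβ⟩, by simp⟩

theorem image_chainIndex_subset (hκ : κ.IsRegular) (hκ₀ : ℵ₀ < κ)
    (hc : IsUnboundedChain κ c) :
    (c ∘ chainIndex d κ.ord c f) '' Iio κ.ord ⊆ c '' Iio κ.ord := by
  rintro _ ⟨β, hβ, rfl⟩
  exact ⟨_, (chainIndex_spec hκ hκ₀ hc hβ).1, rfl⟩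

theorem exists_mem_image_chainIndex_le (hκ : κ.IsRegular) (hκ₀ : ℵ₀ < κ)
    (hc : IsUnboundedChain κ c) :
    ∀ x ∈ c '' Iio κ.ord, ∃ y ∈ (c ∘ chainIndex d κ.ord c f) '' Iio κ.ord, x ≤ y := by
  rintro _ ⟨j, hj, rfl⟩
  exact ⟨_, ⟨j, hj, rfl⟩,
    hc.monotoneOn hj (chainIndex_spec hκ hκ₀ hc hj).1 (le_chainIndex hκ hκ₀ hc hj)⟩

theorem not_exists_upperBound_mem_stage (hκ : κ.IsRegular) (hκ₀ : ℵ₀ < κ)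
    (hc : IsUnboundedChain κ c) {α : Ordinal.{w}} (hα : α < κ.ord) (hlim : Order.IsSuccLimit α) :
    ¬ ∃ b ∈ stage d κ.ord c f α,
      ∀ x ∈ stage d κ.ord c f α ∩ (c ∘ chainIndex d κ.ord c f) '' Iio κ.ord, x ≤ b := by
  rintro ⟨b, hb, hbub⟩
  rw [stage_eq_iUnion hlim] at hb
  obtain ⟨β, hβα, hbβ⟩ := mem_iUnion₂.1 hb
  have hβ : β < κ.ord := hβα.trans hα
  exact (chainIndex_spec hκ hκ₀ hc hβ).2
    (isLowerSet_stage β (hbub _ ⟨chain_mem_stage hβα, β, hβ, rfl⟩) hbβ)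

end ChainIndex

theorem stmt1_general {P : Type*} [Preorder P] (n : ℕ)
    (hcof₁ : ∃ D : Set P, (∀ x : P, ∃ y ∈ D, x ≤ y) ∧ #D = aleph (n + 1))
    (C : Set P) (σ : (aleph (n + 1)).ord.ToType → P)
    (hσmono : Monotone σ) (hσrange : Set.range σ = C)
    (hCunb : ¬ ∃ b : P, ∀ c ∈ C, c ≤ b)
    (d : P → P → P)
    (hd2 : ∀ x x' y y' : P, x' ≤ x → y' ≤ y → d x' y' ≤ d x y) :
    ∃ (Pfam : Ordinal → Set P) (C' : Set P),
      C' ⊆ C ∧ (∀ c ∈ C, ∃ c' ∈ C', c ≤ c') ∧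
      (∀ α β : Ordinal, α ≤ β → Pfam α ⊆ Pfam β) ∧
      (∀ lam : Ordinal, lam < (aleph (n + 1)).ord → Order.IsSuccLimit lam →
        Pfam lam = ⋃ α < lam, Pfam α) ∧
      (⋃ α < (aleph (n + 1)).ord, Pfam α) = Set.univ ∧
      (∀ α : Ordinal, α < (aleph (n + 1)).ord →
        (∀ x ∈ Pfam α, ∀ y ∈ Pfam α, d x y ∈ Pfam α) ∧
        (∀ x ∈ Pfam α, ∀ y : P, y ≤ x → y ∈ Pfam α) ∧
        (∃ D ⊆ Pfam α, (∀ x ∈ Pfam α, ∃ y ∈ D, x ≤ y) ∧ #D ≤ aleph n) ∧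
        (∃ e : α.ToType → P, Set.range e = Pfam α ∩ C' ∧ Function.Injective e ∧
          ∀ x y : α.ToType, x ≤ y ↔ e x ≤ e y) ∧
        (Order.IsSuccLimit α → ¬ ∃ b ∈ Pfam α, ∀ x ∈ Pfam α ∩ C', x ≤ b)) := by
  obtain ⟨D, hD, hDcard⟩ := hcof₁
  obtain ⟨⟨p, -⟩⟩ : Nonempty D := mk_ne_zero_iff.1 (by rw [hDcard]; exact (aleph_pos _).ne')
  have : Nonempty P := ⟨p⟩
  have hκ : (aleph.{u_3} (n + 1)).IsRegular := isRegular_aleph_add_one _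
  have hκ₀ : ℵ₀ < aleph.{u_3} (n + 1) := aleph0_lt_aleph.2 (by positivity)
  obtain ⟨c, hcC, hcmono⟩ := Ordinal.exists_monotoneOn_image_Iio_eq_range
    (o' := (aleph.{u_3} (n + 1)).ord) (by simp) hσmono
  rw [← hσrange, ← hcC] at hCunb ⊢
  obtain ⟨f, rfl⟩ := exists_image_Iio_ord_eq (D := D) (κ := aleph.{u_3} (n + 1)) (by simp [hDcard])
  have hc : IsUnboundedChain (aleph.{u_3} (n + 1)) c := ⟨hcmono, by simpa using hCunb⟩
  refine ⟨stage d _ c f, (c ∘ chainIndex d (aleph.{u_3} (n + 1)).ord c f) '' Iio _,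
    image_chainIndex_subset hκ hκ₀ hc, exists_mem_image_chainIndex_le hκ hκ₀ hc,
    fun α β h => stage_mono h, fun lam _ hlim => stage_eq_iUnion hlim,
    iUnion_stage_eq_univ (isSuccLimit_ord hκ₀.le) (by simpa using hD), fun α hα =>
    ⟨fun x hx y hy => d_mem_lowerClosure_dClosure hd2 hx hy,
      fun x hx y hyx => isLowerSet_stage α hyx hx,
      ⟨_, subset_lowerClosure, fun x hx => mem_lowerClosure.1 hx, ?_⟩, ?_,
      not_exists_upperBound_mem_stage hκ hκ₀ hc hα⟩⟩
  · simpa [← succ_aleph, Order.lt_succ_iff] using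
      lift_mk_dClosure_generators_lt (c := c) (f := f) (chainIndex d _ c f) d hκ₀ hα
  · obtain ⟨e, he⟩ := exists_orderEmbedding_range_eq hκ hκ₀ hc hα.le
    exact ⟨e, he, e.injective, fun x y => e.le_iff_le.symm⟩

/-- decomposition of a quasi-order of cofinality ℵ_{n+1} with an unbounded
ω_{n+1}-chain into a continuous increasing union of d-closed, downward-closed pieces of
cofinality ≤ ℵ_n, together with a cofinal C' ⊆ C such that otp(P_α ∩ C') = α and
P_λ ∩ C' is unbounded in P_λ at limits. -/
theorem stmt1 {P : Type*} [Preorder P] (n : ℕ)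
    (hcof₁ : ∃ D : Set P, (∀ x : P, ∃ y ∈ D, x ≤ y) ∧ #D = aleph (n + 1))
    (hcof₂ : ∀ D : Set P, (∀ x : P, ∃ y ∈ D, x ≤ y) → aleph (n + 1) ≤ #D)
    (C : Set P) (σ : (aleph (n + 1)).ord.ToType → P)
    (hσmono : Monotone σ) (hσinj : Function.Injective σ) (hσrange : Set.range σ = C)
    (hCunb : ¬ ∃ b : P, ∀ c ∈ C, c ≤ b)
    (d : P → P → P)
    (hd1 : ∀ x y : P, x ≤ d x y ∧ y ≤ d x y)
    (hd2 : ∀ x x' y y' : P, x' ≤ x → y' ≤ y → d x' y' ≤ d x y) :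
    ∃ (Pfam : Ordinal → Set P) (C' : Set P),
      C' ⊆ C ∧ (∀ c ∈ C, ∃ c' ∈ C', c ≤ c') ∧
      (∀ α β : Ordinal, α ≤ β → Pfam α ⊆ Pfam β) ∧
      (∀ lam : Ordinal, lam < (aleph (n + 1)).ord → Order.IsSuccLimit lam →
        Pfam lam = ⋃ α < lam, Pfam α) ∧
      (⋃ α < (aleph (n + 1)).ord, Pfam α) = Set.univ ∧
      (∀ α : Ordinal, α < (aleph (n + 1)).ord →
        (∀ x ∈ Pfam α, ∀ y ∈ Pfam α, d x y ∈ Pfam α) ∧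
        (∀ x ∈ Pfam α, ∀ y : P, y ≤ x → y ∈ Pfam α) ∧
        (∃ D ⊆ Pfam α, (∀ x ∈ Pfam α, ∃ y ∈ D, x ≤ y) ∧ #D ≤ aleph n) ∧
        (∃ e : α.ToType → P, Set.range e = Pfam α ∩ C' ∧ Function.Injective e ∧
          ∀ x y : α.ToType, x ≤ y ↔ e x ≤ e y) ∧
        (Order.IsSuccLimit α → ¬ ∃ b ∈ Pfam α, ∀ x ∈ Pfam α ∩ C', x ≤ b)) :=
  stmt1_general n hcof₁ C σ hσmono hσrange hCunb d hd2
end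

section
/- Let f_n (n < ω) be a ≤-increasing sequence in ω^ω and let ⟨φ_{f_n} : I_{f_n} → G⟩ be a coherent family, i.e., φ_{f_m} and φ_{f_n} agree on all but finitely many points of I_{f_m} ∩ I_{f_n} for all m, n. Then there exist finite sets F_n ⊆ I_{f_n} such that for all m ≤ n, the restrictions φ_{f_m} ↾ (I_{f_m} \ F_m) and φ_{f_n} ↾ (I_{f_n} \ F_n) agree on their common domain; consequently the family admits a trivialization ψ : ω × ω → G with ψ ↾ I_{f_n} =* φ_{f_n} for all n. -/
/-- `I_f = {(i,j) : j ≤ f(i)}`. -/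
def Ifun (f : ℕ → ℕ) : Set (ℕ × ℕ) := {p : ℕ × ℕ | p.2 ≤ f p.1}

/-- a coherent family indexed by a ≤-increasing ω-sequence admits finite
sets F_n ⊆ I_{f_n} off which any two members literally agree on the common domain, and
consequently a trivialization ψ with ψ ↾ I_{f_n} =* φ_{f_n}. -/
theorem stmt5 {G : Type*} [AddCommGroup G] (f : ℕ → ℕ → ℕ) (hf : Monotone f)
    (φ : ℕ → ℕ × ℕ → G)
    (hcoh : ∀ m n : ℕ, {p ∈ Ifun (f m) ∩ Ifun (f n) | φ m p ≠ φ n p}.Finite) :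
    ∃ Fs : ℕ → Set (ℕ × ℕ),
      (∀ n, (Fs n).Finite ∧ Fs n ⊆ Ifun (f n)) ∧
      (∀ m n : ℕ, m ≤ n →
        ∀ p ∈ (Ifun (f m) \ Fs m) ∩ (Ifun (f n) \ Fs n), φ m p = φ n p) ∧
      ∃ ψ : ℕ × ℕ → G, ∀ n, {p ∈ Ifun (f n) | ψ p ≠ φ n p}.Finite := by
  classical
  set Fs : ℕ → Set (ℕ × ℕ) :=
    fun n => ⋃ m ∈ Finset.range (n+1), {p ∈ Ifun (f m) | φ m p ≠ φ n p} with hFs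
  have hsub : ∀ m n, m ≤ n → Ifun (f m) ⊆ Ifun (f n) := by
    intro m n h p hp
    exact le_trans hp (hf h p.1)
  have hfin : ∀ n, (Fs n).Finite := by
    intro n
    apply Set.Finite.biUnion (Finset.finite_toSet _)
    intro m hm
    apply (hcoh m n).subset
    rintro p ⟨hp, hne⟩
    exact ⟨⟨hp, hsub m n (Nat.lt_succ_iff.mp (Finset.mem_range.mp hm)) hp⟩, hne⟩
  have hFsub : ∀ n, Fs n ⊆ Ifun (f n) := by
    intro n p hp
    simp only [hFs, Set.mem_iUnion] at hp
    obtain ⟨m, hm, hp, _⟩ := hp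
    exact hsub m n (Nat.lt_succ_iff.mp (Finset.mem_range.mp hm)) hp
  have key : ∀ m n, m ≤ n →
      ∀ p ∈ (Ifun (f m) \ Fs m) ∩ (Ifun (f n) \ Fs n), φ m p = φ n p := by
    rintro m n hmn p ⟨⟨hpm, -⟩, ⟨-, hpn⟩⟩
    by_contra hne
    apply hpn
    simp only [hFs, Set.mem_iUnion]
    exact ⟨m, Finset.mem_range.mpr (Nat.lt_succ_of_le hmn), hpm, hne⟩
  have key2 : ∀ m n, ∀ p, p ∈ Ifun (f m) \ Fs m → p ∈ Ifun (f n) \ Fs n →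
      φ m p = φ n p := by
    intro m n p hm hn
    rcases le_total m n with h | h
    · exact key m n h p ⟨hm, hn⟩
    · exact (key n m h p ⟨hn, hm⟩).symm
  refine ⟨Fs, fun n => ⟨hfin n, hFsub n⟩, key, ?_⟩
  refine ⟨fun p => if h : ∃ k, p ∈ Ifun (f k) \ Fs k then φ h.choose p else 0, ?_⟩
  intro n
  apply (hfin n).subset
  rintro p ⟨hpI, hne⟩
  by_contra hpF
  have hmem : p ∈ Ifun (f n) \ Fs n := ⟨hpI, hpF⟩
  have h : ∃ k, p ∈ Ifun (f k) \ Fs k := ⟨n, hmem⟩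
  simp only [dif_pos h] at hne
  exact hne (key2 h.choose n p h.choose_spec hmem)
end

section
/- Assume 2^{ℵ0} < 2^{ℵ1}. Let P ⊆ (ω^ω, ≤*) be closed under pointwise maximum with cofinality ℵ1, containing an ω1-chain C unbounded in P, and let G be a nontrivial abelian group. Then there exists a coherent family Φ = ⟨φ_f : I_f → G | f ∈ P⟩ whose restriction to C is nontrivial, i.e., no ψ : ω × ω → G satisfies ψ ↾ I_f =* φ_f for all f ∈ C. -/
open Cardinal

/-- `f ≤* g`: eventual domination. -/
def leStar (f g : ℕ → ℕ) : Prop := {i : ℕ | ¬ f i ≤ g i}.Finite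

/-!
Enumerate a cofinal part of `P` as `D ξ`, `ξ < ω₁`. No countable subset of `P` bounds the
unbounded `ω₁`-chain `C`, so recursively one picks `c ξ ∈ C` not `≤*` any finite maximum of the
earlier `d η = D η ⊔ c η`, and then an infinite set `S ξ` on the graph of `c ξ` meeting every
earlier `I_{d η}` in a finite set. For `ε ⊆ ω₁` let `F (ξ + 1) = F ξ + e · 1_{S (ξ + 1)}` if
`ξ ∈ ε` and `F (ξ + 1) = F ξ` otherwise, glued along a countable enumeration at limits; then
`F ξ =* F ζ` on `I_{d η}` for `η ≤ ζ ≤ ξ`, and `φ_f := F (least ξ with f ≤* d ξ)` is coherent.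
If `ε ≠ ε'` first differ at `ξ`, the two families differ on all of `S (ξ + 1) ⊆ I_{c (ξ + 1)}`,
so they cannot share a trivialization modulo the countable group `ℤ e`. There are `2^ℵ₁` sets
`ε` but only `2^ℵ₀` such trivializations.
-/

section

universe u v

open Ordinal Set Filter Order

theorem leStar_iff_eventuallyLE {f g : ℕ → ℕ} : leStar f g ↔ f ≤ᶠ[cofinite] g :=
  eventually_cofinite.symm

theorem leStar_of_le {f g : ℕ → ℕ} (h : f ≤ g) : leStar f g :=
  leStar_iff_eventuallyLE.2 (.of_forall h)

theorem leStar_trans {f g h : ℕ → ℕ} (hfg : leStar f g) (hgh : leStar g h) : leStar f h :=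
  leStar_iff_eventuallyLE.2 <|
    (leStar_iff_eventuallyLE.1 hfg).trans (leStar_iff_eventuallyLE.1 hgh)

theorem eventuallyEq_cofinite_inf_principal_iff {α β : Type*} {A : Set α} {u v : α → β} :
    u =ᶠ[cofinite ⊓ 𝓟 A] v ↔ {p ∈ A | u p ≠ v p}.Finite := by
  simp only [EventuallyEq, eventually_inf_principal, eventually_cofinite, Classical.not_imp]

theorem cofinite_inf_principal_Ifun_mono {f g : ℕ → ℕ} (h : leStar f g) :
    cofinite ⊓ 𝓟 (Ifun f) ≤ cofinite ⊓ 𝓟 (Ifun g) := by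
  refine le_inf inf_le_left (le_principal_iff.2 ?_)
  rw [mem_inf_principal, mem_cofinite]
  refine (h.biUnion fun i _ => (finite_singleton i).prod (finite_Iic (f i))).subset ?_
  rintro ⟨i, j⟩ hij
  simp only [Ifun, mem_compl_iff, mem_ofPred_eq, Classical.not_imp] at hij
  exact mem_biUnion (fun hle => hij.2 (hij.1.trans hle)) ⟨rfl, hij.1⟩

theorem Set.Countable.supClosure {α : Type*} [SemilatticeSup α] {s : Set α} (hs : s.Countable) :
    (supClosure s).Countable := by
  refine ((countable_ofPred_finite_subset hs).biUnion fun t ht =>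
    ht.1.supClosure.countable).mono ?_
  rintro _ ⟨u, hu, hus, rfl⟩
  exact mem_biUnion ⟨u.finite_toSet, hus⟩ (finsetSup'_mem_supClosure hu fun _ hi => hi)

theorem bddAbove_of_aleph_one_le_cof {α : Type*} [LinearOrder α] (hα : ℵ₁ ≤ Order.cof α)
    {s : Set α} (hs : s.Countable) : BddAbove s := by
  by_contra h
  have hs' : IsCofinal s := fun x => (not_bddAbove_iff.1 h x).imp fun _ hy => ⟨hy.1, hy.2.le⟩
  exact (le_aleph0_iff_set_countable.2 hs).not_gt
    (aleph0_lt_aleph_one.trans_le (hα.trans (cof_le hs')))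

theorem aleph_one_le_cof_toType : ℵ₁ ≤ Order.cof (ℵ₁ : Cardinal.{u}).ord.ToType := by
  rw [cof_toType, isRegular_aleph_one.cof_ord]

theorem Ordinal.countable_Iio_of_lt_omega_one {o : Ordinal.{u}} (h : o < ω₁) :
    (Iio o).Countable := by
  rw [← le_aleph0_iff_set_countable, Cardinal.mk_Iio_ordinal, lift_le_aleph0,
    ← lt_aleph_one_iff, ← lt_ord, ord_aleph]
  exact h

-- an enumeration of `Iio o` only when `0 < o < ω₁`
open Classical in
noncomputable def Ordinal.enumIio (o : Ordinal.{u}) : ℕ → Ordinal.{u} :=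
  if h : ∃ e : ℕ → Ordinal, range e = Iio o then h.choose else fun _ => 0

theorem Ordinal.range_enumIio {o : Ordinal.{u}} (h₀ : 0 < o) (h : o < ω₁) :
    range (enumIio o) = Iio o := by
  have hex : ∃ e : ℕ → Ordinal, range e = Iio o :=
    ((countable_Iio_of_lt_omega_one h).exists_eq_range ⟨0, h₀⟩).imp fun _ he => he.symm
  rw [enumIio, dif_pos hex]
  exact hex.choose_spec

theorem Ordinal.partialSups_enumIio_lt {o : Ordinal.{u}} (h₀ : 0 < o) (n : ℕ) :
    partialSups (enumIio o) n < o := by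
  obtain ⟨j, -, hj⟩ := exists_partialSups_eq (enumIio o) n
  rw [hj, enumIio]
  split_ifs with hex
  · exact hex.choose_spec.subset (mem_range_self j)
  · exact h₀

theorem two_power_aleph0_lt_two_power_aleph_one_of_univ
    (h : (2 : Cardinal.{u}) ^ ℵ₀ < 2 ^ ℵ₁) : (2 : Cardinal.{v}) ^ ℵ₀ < 2 ^ ℵ₁ := by
  have := Cardinal.lift_lt.{u, v}.2 h
  rw [← Cardinal.lift_lt.{v, u}]
  simpa using this

theorem exists_image_Iio_omega_one_eq {α : Type u} {s : Set α} (hs : #s = ℵ₁) :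
    ∃ D : Ordinal.{u} → α, D '' Iio ω₁ = s := by
  obtain ⟨e⟩ : Nonempty (s ≃ Iio (ω₁ : Ordinal.{u})) := by
    rw [← lift_mk_eq'.{u, u + 1}]
    simp [hs, Cardinal.mk_Iio_ordinal, card_omega]
  refine ⟨fun ξ => e.symm (if h : ξ ∈ Iio ω₁ then ⟨ξ, h⟩ else ⟨0, omega_pos 1⟩), ?_⟩
  ext x
  constructor
  · rintro ⟨ξ, -, rfl⟩
    exact Subtype.mem _
  · intro hx
    exact ⟨e ⟨x, hx⟩, (e ⟨x, hx⟩).2, by simp⟩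

theorem exists_mem_symmDiff_forall_lt_iff {α : Type*} [LinearOrder α] [WellFoundedLT α]
    {s t : Set α} (h : s ≠ t) : ∃ a ∈ symmDiff s t, ∀ b < a, (b ∈ s ↔ b ∈ t) := by
  obtain ⟨a, ha, hmin⟩ := wellFounded_lt.has_min _ (symmDiff_nonempty.2 h)
  refine ⟨a, ha, fun b hb => ?_⟩
  by_contra hst
  exact hmin b (by rw [mem_symmDiff]; tauto) hb

theorem exists_forall_not_leStar {ι : Type*} [Preorder ι]
    (hι : ∀ s : Set ι, s.Countable → BddAbove s) {σ : ι → ℕ → ℕ}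
    (hσ : ∀ a b, a ≤ b → leStar (σ a) (σ b)) {P T : Set (ℕ → ℕ)}
    (hunb : ¬ ∃ b ∈ P, ∀ a, leStar (σ a) b) (hTP : T ⊆ P) (hT : T.Countable) :
    ∃ a, ∀ t ∈ T, ¬ leStar (σ a) t := by
  have hunb' (t) (ht : t ∈ T) : ∃ a, ¬ leStar (σ a) t := by
    by_contra! h
    exact hunb ⟨t, hTP ht, h⟩
  choose a ha using hunb'
  have := hT.to_subtype
  obtain ⟨b, hb⟩ := hι _ (countable_range fun t : T => a t t.2)
  exact ⟨b, fun t ht hle => ha t ht (leStar_trans (hσ _ _ (hb ⟨⟨t, ht⟩, rfl⟩)) hle)⟩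

theorem exists_infinite_forall_finite_le {x : ℕ → ℕ} {T : Set (ℕ → ℕ)} (hT : T.Countable)
    (hx : ∀ t ∈ supClosure T, ¬ leStar x t) :
    ∃ A : Set ℕ, A.Infinite ∧ ∀ t ∈ T, {i ∈ A | x i ≤ t i}.Finite := by
  rcases T.eq_empty_or_nonempty with rfl | hne
  · exact ⟨univ, infinite_univ, by simp⟩
  obtain ⟨t, rfl⟩ := hT.exists_eq_range hne
  have hfreq : ∀ n, ∃ᶠ i in atTop, partialSups t n i < x i := by
    intro n
    rw [Nat.frequently_atTop_iff_infinite]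
    have hmem : partialSups t n ∈ supClosure (range t) := by
      rw [partialSups_eq_sup'_range]
      exact finsetSup'_mem_supClosure _ fun m _ => mem_range_self m
    simpa [leStar] using hx _ hmem
  obtain ⟨φ, hφ, hφx⟩ := extraction_forall_of_frequently hfreq
  refine ⟨range φ, infinite_range_of_injective hφ.injective, forall_mem_range.2 fun m => ?_⟩
  refine ((finite_Iio m).image φ).subset ?_
  rintro _ ⟨⟨n, rfl⟩, hn⟩
  refine mem_image_of_mem φ (mem_Iio.2 (not_le.1 fun hmn => ?_))
  exact (hφx n).not_ge (hn.trans (le_partialSups_of_le t hmn (φ n)))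

section Construction

variable (C : Set (ℕ → ℕ)) (D : Ordinal.{u} → ℕ → ℕ)

open Classical in
noncomputable def escSeq (ξ : Ordinal.{u}) : ℕ → ℕ :=
  if h : ∃ x ∈ C, ∀ t ∈ supClosure (range fun η : Iio ξ => D η ⊔ escSeq η), ¬ leStar x t
  then h.choose else 0
termination_by ξ
decreasing_by exact η.2

noncomputable def domSeq (ξ : Ordinal.{u}) : ℕ → ℕ := D ξ ⊔ escSeq C D ξ

variable {C D} {P : Set (ℕ → ℕ)} (hP : SupClosed P) (hCP : C ⊆ P) (hDP : ∀ ξ < ω₁, D ξ ∈ P)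
  (hC : ∀ T ⊆ P, T.Countable → ∃ x ∈ C, ∀ t ∈ T, ¬ leStar x t)
include hP hCP hDP hC

theorem escSeq_spec {ξ : Ordinal.{u}} (hξ : ξ < ω₁) : escSeq C D ξ ∈ C ∧
    ∀ t ∈ supClosure (domSeq C D '' Iio ξ), ¬ leStar (escSeq C D ξ) t := by
  induction ξ using WellFoundedLT.induction with
  | ind ξ ih =>
    have hsub : domSeq C D '' Iio ξ ⊆ P := by
      rintro _ ⟨η, hη, rfl⟩
      exact hP (hDP η (hη.trans hξ)) (hCP (ih η hη (hη.trans hξ)).1)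
    have hex := hC _ (supClosure_min hsub hP)
      ((countable_Iio_of_lt_omega_one hξ).image _).supClosure
    rw [image_eq_range] at hex ⊢
    unfold domSeq at hex ⊢
    rw [escSeq, dif_pos hex]
    exact hex.choose_spec

theorem escSeq_mem {ξ : Ordinal.{u}} (hξ : ξ < ω₁) : escSeq C D ξ ∈ C :=
  (escSeq_spec hP hCP hDP hC hξ).1

theorem domSeq_mem {ξ : Ordinal.{u}} (hξ : ξ < ω₁) : domSeq C D ξ ∈ P :=
  hP (hDP ξ hξ) (hCP (escSeq_mem hP hCP hDP hC hξ))

theorem not_leStar_escSeq_domSeq {η ξ : Ordinal.{u}} (hηξ : η < ξ) (hξ : ξ < ω₁) :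
    ¬ leStar (escSeq C D ξ) (domSeq C D η) :=
  (escSeq_spec hP hCP hDP hC hξ).2 _ (subset_supClosure (mem_image_of_mem _ hηξ))

theorem exists_infinite_subset_Ifun_escSeq {ξ : Ordinal.{u}} (hξ : ξ < ω₁) :
    ∃ S ⊆ Ifun (escSeq C D ξ), S.Infinite ∧ ∀ η < ξ, (S ∩ Ifun (domSeq C D η)).Finite := by
  obtain ⟨A, hA, hAfin⟩ := exists_infinite_forall_finite_le
    ((countable_Iio_of_lt_omega_one hξ).image (domSeq C D)) (escSeq_spec hP hCP hDP hC hξ).2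
  let graph : ℕ → ℕ × ℕ := fun i => (i, escSeq C D ξ i)
  refine ⟨graph '' A, ?_, hA.image fun i _ j _ h => congrArg Prod.fst h,
    fun η hη => ((hAfin _ (mem_image_of_mem _ hη)).image graph).subset ?_⟩
  · rintro _ ⟨i, -, rfl⟩
    exact le_refl (escSeq C D ξ i)
  · rintro _ ⟨⟨i, hi, rfl⟩, hle⟩
    exact mem_image_of_mem _ ⟨hi, hle⟩

end Construction

section CoherentSeq

variable {G : Type*} [AddZeroClass G] (d : Ordinal.{u} → ℕ → ℕ) (g : Ordinal.{u} → ℕ × ℕ → G)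

open Classical in
noncomputable def coverIndex (l : Ordinal.{u}) (p : ℕ × ℕ) : ℕ :=
  if h : ∃ n, p ∈ Ifun (d (enumIio l n)) then Nat.find h else 0

/- At a limit `l` the value at `p` is read off at the stage `partialSups (enumIio l) k`, `k` least
with `p ∈ Ifun (d (enumIio l k))`; on `Ifun (d (enumIio l m))` only the stages `k ≤ m` occur. -/
noncomputable def coherentSeq (o : Ordinal.{u}) : ℕ × ℕ → G :=
  limitRecOn o 0 (fun a F => F + g a) fun l hl F p =>
    F (partialSups (enumIio l) (coverIndex d l p)) (partialSups_enumIio_lt hl.bot_lt _) p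

theorem coherentSeq_zero : coherentSeq d g 0 = 0 := limitRecOn_zero ..

theorem coherentSeq_add_one (a : Ordinal.{u}) :
    coherentSeq d g (a + 1) = coherentSeq d g a + g a := limitRecOn_add_one ..

theorem coherentSeq_limit {l : Ordinal.{u}} (hl : IsSuccLimit l) (p : ℕ × ℕ) :
    coherentSeq d g l p = coherentSeq d g (partialSups (enumIio l) (coverIndex d l p)) p := by
  rw [coherentSeq, limitRecOn_limit _ _ _ _ hl]
  rfl

theorem coherentSeq_congr {g' : Ordinal.{u} → ℕ × ℕ → G} {ξ : Ordinal.{u}}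
    (h : ∀ a < ξ, g a = g' a) : coherentSeq d g ξ = coherentSeq d g' ξ := by
  induction ξ using limitRecOn with
  | zero => rw [coherentSeq_zero, coherentSeq_zero]
  | add_one a ih =>
    rw [coherentSeq_add_one, coherentSeq_add_one, ih fun b hb => h b (hb.trans (lt_add_one a)),
      h a (lt_add_one a)]
  | limit l hl ih =>
    funext p
    rw [coherentSeq_limit _ _ hl, coherentSeq_limit _ _ hl]
    have hlt := partialSups_enumIio_lt hl.bot_lt (coverIndex d l p)
    rw [ih _ hlt fun b hb => h b (hb.trans hlt)]

theorem coherentSeq_limit_eventuallyEq {l : Ordinal.{u}} (hl : IsSuccLimit l) (hlω : l < ω₁)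
    (ih : ∀ ξ < l, ∀ η ζ, η ≤ ζ → ζ ≤ ξ →
      coherentSeq d g ξ =ᶠ[cofinite ⊓ 𝓟 (Ifun (d η))] coherentSeq d g ζ)
    {η ζ : Ordinal.{u}} (hηζ : η ≤ ζ) (hζ : ζ < l) :
    coherentSeq d g l =ᶠ[cofinite ⊓ 𝓟 (Ifun (d η))] coherentSeq d g ζ := by
  classical
  set e := enumIio l
  have he : range e = Iio l := range_enumIio hl.bot_lt hlω
  obtain ⟨m₁, hm₁⟩ : η ∈ range e := he ▸ hηζ.trans_lt hζ
  obtain ⟨m₂, hm₂⟩ : ζ ∈ range e := he ▸ hζ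
  set m := max m₁ m₂
  have hm : partialSups e m < l := partialSups_enumIio_lt hl.bot_lt m
  have hζm : ζ ≤ partialSups e m := hm₂ ▸ le_partialSups_of_le e (le_max_right _ _)
  have hstages : ∀ k ∈ Iic m, ∀ᶠ p in cofinite, p ∈ Ifun (d (e k)) →
      coherentSeq d g (partialSups e m) p = coherentSeq d g (partialSups e k) p := fun k hk =>
    eventually_inf_principal.1 (ih _ hm _ _ (le_partialSups e k) ((partialSups e).mono hk))
  refine EventuallyEq.trans ?_ (ih _ hm η ζ hηζ hζm)
  rw [EventuallyEq, eventually_inf_principal]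
  filter_upwards [(finite_Iic m).eventually_all.2 hstages] with p hp hpη
  have hex : ∃ n, p ∈ Ifun (d (e n)) := ⟨m₁, hm₁ ▸ hpη⟩
  have hcov : coverIndex d l p = Nat.find hex := dif_pos hex
  rw [coherentSeq_limit _ _ hl, hp _ (hcov ▸ (Nat.find_min' hex (hm₁ ▸ hpη)).trans
    (le_max_left _ _)) (hcov ▸ Nat.find_spec hex)]

theorem coherentSeq_eventuallyEq
    (hg : ∀ a < ω₁, ∀ η ≤ a, g a =ᶠ[cofinite ⊓ 𝓟 (Ifun (d η))] 0) {ξ η ζ : Ordinal.{u}}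
    (hξ : ξ < ω₁) (hηζ : η ≤ ζ) (hζξ : ζ ≤ ξ) :
    coherentSeq d g ξ =ᶠ[cofinite ⊓ 𝓟 (Ifun (d η))] coherentSeq d g ζ := by
  induction ξ using limitRecOn generalizing η ζ with
  | zero => rw [nonpos_iff_eq_zero.1 hζξ]
  | add_one a ih =>
    rcases hζξ.eq_or_lt with rfl | hζa
    · rfl
    have ha : a < ω₁ := (lt_add_one a).trans hξ
    refine EventuallyEq.trans ?_ (ih ha hηζ (Order.lt_add_one_iff.1 hζa))
    filter_upwards [hg a ha η (hηζ.trans (Order.lt_add_one_iff.1 hζa))] with p hp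
    simp [coherentSeq_add_one, hp]
  | limit l hl ih =>
    rcases hζξ.eq_or_lt with rfl | hζl
    · rfl
    exact coherentSeq_limit_eventuallyEq d g hl hξ
      (fun ξ hξl η ζ hηζ hζξ => ih ξ hξl (hξl.trans hξ) hηζ hζξ) hηζ hζl

end CoherentSeq

section Rank

variable {d : Ordinal.{u} → ℕ → ℕ} {f : ℕ → ℕ}

noncomputable def leStarRank (d : Ordinal.{u} → ℕ → ℕ) (f : ℕ → ℕ) : Ordinal.{u} :=
  sInf {ξ | leStar f (d ξ)}

theorem leStarRank_le_and_leStar {ξ : Ordinal.{u}} (h : leStar f (d ξ)) :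
    leStarRank d f ≤ ξ ∧ leStar f (d (leStarRank d f)) :=
  ⟨csInf_le' h, csInf_mem (s := {ξ | leStar f (d ξ)}) ⟨ξ, h⟩⟩

theorem leStarRank_eq {ξ : Ordinal.{u}} (h : leStar f (d ξ)) (hlt : ∀ η < ξ, ¬ leStar f (d η)) :
    leStarRank d f = ξ :=
  (leStarRank_le_and_leStar h).1.antisymm <| not_lt.1 fun hr =>
    hlt _ hr (leStarRank_le_and_leStar h).2

theorem eventuallyEq_leStarRank {G : Type*} {P : Set (ℕ → ℕ)} {F : Ordinal.{u} → ℕ × ℕ → G}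
    (hd : ∀ f ∈ P, ∃ ξ < ω₁, leStar f (d ξ))
    (hF : ∀ {ξ η ζ}, ξ < ω₁ → η ≤ ζ → ζ ≤ ξ → F ξ =ᶠ[cofinite ⊓ 𝓟 (Ifun (d η))] F ζ)
    {f g : ℕ → ℕ} (hf : f ∈ P) (hg : g ∈ P) :
    F (leStarRank d f) =ᶠ[cofinite ⊓ 𝓟 (Ifun f ∩ Ifun g)] F (leStarRank d g) := by
  wlog hfg : leStarRank d f ≤ leStarRank d g generalizing f g
  · rw [inter_comm]
    exact (this hg hf (le_of_not_ge hfg)).symm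
  obtain ⟨ξ, hξ, hfξ⟩ := hd f hf
  obtain ⟨ζ, hζ, hgζ⟩ := hd g hg
  have hmono : cofinite ⊓ 𝓟 (Ifun f ∩ Ifun g) ≤ cofinite ⊓ 𝓟 (Ifun (d (leStarRank d f))) :=
    (inf_le_inf_left _ (principal_mono.2 inter_subset_left)).trans
      (cofinite_inf_principal_Ifun_mono (leStarRank_le_and_leStar hfξ).2)
  exact (hF ((leStarRank_le_and_leStar hgζ).1.trans_lt hζ) le_rfl hfg).symm.filter_mono hmono

end Rank

section Jumps

variable {G : Type*} [AddZeroClass G] (S : Ordinal.{u} → Set (ℕ × ℕ)) (e : G)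

noncomputable def jumps (ε : Set Ordinal.{u}) : Ordinal.{u} → ℕ × ℕ → G :=
  ε.indicator fun a => (S (a + 1)).indicator fun _ => e

theorem jumps_eventuallyEq_zero {d : Ordinal.{u} → ℕ → ℕ}
    (hS : ∀ ξ < ω₁, ∀ η < ξ, (S ξ ∩ Ifun (d η)).Finite) (ε : Set Ordinal.{u}) {a η : Ordinal.{u}}
    (ha : a < ω₁) (hηa : η ≤ a) : jumps S e ε a =ᶠ[cofinite ⊓ 𝓟 (Ifun (d η))] 0 := by
  rw [eventuallyEq_cofinite_inf_principal_iff]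
  refine (hS _ ((isSuccLimit_omega 1).add_one_lt ha) η (Order.lt_add_one_iff.2 hηa)).subset ?_
  rintro p ⟨hpη, hp⟩
  refine ⟨not_not.1 fun hpS => hp ?_, hpη⟩
  by_cases haε : a ∈ ε <;> simp [jumps, haε, hpS]

theorem coherentSeq_jumps_mem (d : Ordinal.{u} → ℕ → ℕ) (ε : Set Ordinal.{u})
    {M : AddSubmonoid G} (he : e ∈ M) (ξ : Ordinal.{u}) (p : ℕ × ℕ) :
    coherentSeq d (jumps S e ε) ξ p ∈ M := by
  induction ξ using limitRecOn with
  | zero => simp [coherentSeq_zero, M.zero_mem]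
  | add_one a ih =>
    rw [coherentSeq_add_one, Pi.add_apply]
    refine M.add_mem ih ?_
    by_cases haε : a ∈ ε <;> by_cases hp : p ∈ S (a + 1) <;> simp [jumps, haε, hp, he]
  | limit l hl ih =>
    rw [coherentSeq_limit _ _ hl]
    exact ih _ (partialSups_enumIio_lt hl.bot_lt _)

theorem coherentSeq_jumps_add_one_ne [IsLeftCancelAdd G] (he : e ≠ 0) (d : Ordinal.{u} → ℕ → ℕ)
    {ε ε' : Set Ordinal.{u}} {a : Ordinal.{u}} (hpre : ∀ b < a, (b ∈ ε ↔ b ∈ ε'))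
    (hε : a ∈ ε) (hε' : a ∉ ε') {p : ℕ × ℕ} (hp : p ∈ S (a + 1)) :
    coherentSeq d (jumps S e ε) (a + 1) p ≠ coherentSeq d (jumps S e ε') (a + 1) p := by
  have hcongr : coherentSeq d (jumps S e ε) a = coherentSeq d (jumps S e ε') a :=
    coherentSeq_congr d _ fun b hb => by
      by_cases hb' : b ∈ ε' <;> simp [jumps, hb', hpre b hb]
  rw [coherentSeq_add_one, coherentSeq_add_one, hcongr]
  simp only [jumps, Pi.add_apply, Set.indicator_of_mem hε, Set.indicator_of_notMem hε',
    Set.indicator_of_mem hp, Pi.zero_apply]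
  exact fun h => he (add_left_cancel h)

end Jumps

theorem mk_le_two_power_aleph0_of_forall_trivial {E G : Type*} {C : Set (ℕ → ℕ)} {K : Set G}
    (hK : K.Countable) (Φ : E → (ℕ → ℕ) → ℕ × ℕ → G) (hΦK : ∀ ε f p, Φ ε f p ∈ K)
    (hsep : Pairwise fun ε ε' => ∃ f ∈ C, ¬ Φ ε f =ᶠ[cofinite ⊓ 𝓟 (Ifun f)] Φ ε' f)
    (htriv : ∀ ε, ∃ ψ : ℕ × ℕ → G, ∀ f ∈ C, ψ =ᶠ[cofinite ⊓ 𝓟 (Ifun f)] Φ ε f) :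
    #E ≤ 2 ^ ℵ₀ := by
  classical
  choose ψ hψ using htriv
  -- only the values of `ψ ε` in `K` matter, and there are at most continuum many such codes
  let code : E → ℕ × ℕ → Option K := fun ε p => if h : ψ ε p ∈ K then some ⟨_, h⟩ else none
  have hcode : Function.Injective code := by
    intro ε ε' hεε'
    by_contra hne
    obtain ⟨f, hf, hΦ⟩ := hsep hne
    refine hΦ ?_
    filter_upwards [hψ ε f hf, hψ ε' f hf] with p hp hp'
    have := congrFun hεε' p
    simp only [code, hp, hp', hΦK, dif_pos, Option.some.injEq, Subtype.mk.injEq] at this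
    exact this
  have := hK.to_subtype
  have hcount : #(ℕ × ℕ → Option K) ≤ 2 ^ ℵ₀ := by
    rw [mk_arrow, mk_eq_aleph0 (ℕ × ℕ), lift_aleph0, ← power_self_eq le_rfl]
    exact power_le_power_right (lift_le_aleph0.2 mk_le_aleph0)
  simpa using (lift_mk_le_lift_mk_of_injective hcode).trans (lift_le.2 hcount)

theorem not_eventuallyEq_coherentSeq_jumps {G : Type*} [AddZeroClass G] [IsLeftCancelAdd G]
    {P C : Set (ℕ → ℕ)} {D : Ordinal.{u} → ℕ → ℕ}
    (hP : SupClosed P) (hCP : C ⊆ P) (hDP : ∀ ξ < ω₁, D ξ ∈ P)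
    (hC : ∀ T ⊆ P, T.Countable → ∃ x ∈ C, ∀ t ∈ T, ¬ leStar x t)
    {S : Ordinal.{u} → Set (ℕ × ℕ)} (hSsub : ∀ ξ < ω₁, S ξ ⊆ Ifun (escSeq C D ξ))
    (hSinf : ∀ ξ < ω₁, (S ξ).Infinite) {e : G} (he : e ≠ 0) {ε ε' : Set Ordinal.{u}}
    {a : Ordinal.{u}} (ha : a < ω₁) (hpre : ∀ b < a, (b ∈ ε ↔ b ∈ ε')) (hε : a ∈ ε)
    (hε' : a ∉ ε') :
    ¬ coherentSeq (domSeq C D) (jumps S e ε) (leStarRank (domSeq C D) (escSeq C D (a + 1)))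
      =ᶠ[cofinite ⊓ 𝓟 (Ifun (escSeq C D (a + 1)))]
      coherentSeq (domSeq C D) (jumps S e ε') (leStarRank (domSeq C D) (escSeq C D (a + 1))) := by
  have ha₁ : a + 1 < ω₁ := (isSuccLimit_omega 1).add_one_lt ha
  have hrank : leStarRank (domSeq C D) (escSeq C D (a + 1)) = a + 1 :=
    leStarRank_eq (leStar_of_le le_sup_right) fun η hη =>
      not_leStar_escSeq_domSeq hP hCP hDP hC hη ha₁
  rw [hrank, eventuallyEq_cofinite_inf_principal_iff]
  exact fun hfin => hSinf _ ha₁ (hfin.subset fun p hp =>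
    ⟨hSsub _ ha₁ hp, coherentSeq_jumps_add_one_ne S e he _ hpre hε hε' hp⟩)

theorem exists_coherent_not_trivial {G : Type*} [AddCommGroup G] [Nontrivial G]
    (hca : (2 : Cardinal.{v}) ^ ℵ₀ < 2 ^ ℵ₁) {P C : Set (ℕ → ℕ)} {D : Ordinal.{u} → ℕ → ℕ}
    (hP : SupClosed P) (hCP : C ⊆ P) (hDP : ∀ ξ < ω₁, D ξ ∈ P)
    (hD : ∀ f ∈ P, ∃ ξ < ω₁, leStar f (D ξ))
    (hC : ∀ T ⊆ P, T.Countable → ∃ x ∈ C, ∀ t ∈ T, ¬ leStar x t) :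
    ∃ φ : (ℕ → ℕ) → ℕ × ℕ → G,
      (∀ f ∈ P, ∀ g ∈ P, φ f =ᶠ[cofinite ⊓ 𝓟 (Ifun f ∩ Ifun g)] φ g) ∧
      ¬ ∃ ψ : ℕ × ℕ → G, ∀ f ∈ C, ψ =ᶠ[cofinite ⊓ 𝓟 (Ifun f)] φ f := by
  obtain ⟨e, he⟩ := exists_ne (0 : G)
  choose! S hSsub hSinf hSfin using fun ξ (hξ : ξ < ω₁) =>
    exists_infinite_subset_Ifun_escSeq hP hCP hDP hC hξ
  set d := domSeq C D
  have hd : ∀ f ∈ P, ∃ ξ < ω₁, leStar f (d ξ) := fun f hf => (hD f hf).imp fun _ ⟨hξ, hfξ⟩ =>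
    ⟨hξ, leStar_trans hfξ (leStar_of_le le_sup_left)⟩
  let Φ : 𝒫 (Iio (ω₁ : Ordinal.{u})) → (ℕ → ℕ) → ℕ × ℕ → G := fun ε f =>
    coherentSeq d (jumps S e ε) (leStarRank d f)
  have hcoh (ε) : ∀ f ∈ P, ∀ g ∈ P, Φ ε f =ᶠ[cofinite ⊓ 𝓟 (Ifun f ∩ Ifun g)] Φ ε g :=
    fun f hf g hg => eventuallyEq_leStarRank (F := coherentSeq d (jumps S e ε)) hd
      (coherentSeq_eventuallyEq d _ fun _ ha _ hηa => jumps_eventuallyEq_zero S e hSfin ε ha hηa)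
      hf hg
  have hsep : Pairwise fun ε ε' => ∃ f ∈ C, ¬ Φ ε f =ᶠ[cofinite ⊓ 𝓟 (Ifun f)] Φ ε' f := by
    intro ε ε' hne
    obtain ⟨a, ha, hpre⟩ := exists_mem_symmDiff_forall_lt_iff (Subtype.coe_ne_coe.2 hne)
    have haω : a < ω₁ := by rcases mem_symmDiff.1 ha with h | h; exacts [ε.2 h.1, ε'.2 h.1]
    refine ⟨escSeq C D (a + 1), escSeq_mem hP hCP hDP hC ((isSuccLimit_omega 1).add_one_lt haω), ?_⟩
    rcases mem_symmDiff.1 ha with ⟨h, h'⟩ | ⟨h, h'⟩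
    · exact not_eventuallyEq_coherentSeq_jumps hP hCP hDP hC hSsub hSinf he haω hpre h h'
    · exact fun hΦ => not_eventuallyEq_coherentSeq_jumps hP hCP hDP hC hSsub hSinf he haω
        (fun b hb => (hpre b hb).symm) h h' hΦ.symm
  by_contra! htriv
  have hcard := mk_le_two_power_aleph0_of_forall_trivial (K := AddSubgroup.zmultiples e)
    (countable_range _) Φ (fun ε f p => coherentSeq_jumps_mem S e d ε.1
      (AddSubgroup.mem_zmultiples e) _ p) hsep fun ε => htriv (Φ ε) (hcoh ε)
  rw [mk_powerset, Cardinal.mk_Iio_ordinal, card_omega] at hcard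
  exact (two_power_aleph0_lt_two_power_aleph_one_of_univ hca).not_ge (by simpa using hcard)

end

theorem stmt8_general {G : Type*} [AddCommGroup G] [Nontrivial G]
    (hca : (2 : Cardinal) ^ aleph0 < 2 ^ aleph 1)
    (P : Set (ℕ → ℕ)) (hmax : ∀ f ∈ P, ∀ g ∈ P, f ⊔ g ∈ P)
    (hcof₁ : ∃ D ⊆ P, (∀ f ∈ P, ∃ g ∈ D, leStar f g) ∧ #D = aleph 1)
    (C : Set (ℕ → ℕ)) (hCP : C ⊆ P)
    (σ : (aleph 1).ord.ToType → ℕ → ℕ) (hσrange : Set.range σ = C)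
    (hσmono : ∀ a b : (aleph 1).ord.ToType, a ≤ b → leStar (σ a) (σ b))
    (hCunb : ¬ ∃ b ∈ P, ∀ f ∈ C, leStar f b) :
    ∃ φ : (ℕ → ℕ) → ℕ × ℕ → G,
      (∀ f ∈ P, ∀ g ∈ P, {p ∈ Ifun f ∩ Ifun g | φ f p ≠ φ g p}.Finite) ∧
      ¬ ∃ ψ : ℕ × ℕ → G, ∀ f ∈ C, {p ∈ Ifun f | ψ p ≠ φ f p}.Finite := by
  obtain ⟨D₀, hD₀P, hD₀, hD₀card⟩ := hcof₁
  obtain ⟨D, rfl⟩ := exists_image_Iio_omega_one_eq hD₀card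
  have hC (T) (hTP : T ⊆ P) (hT : T.Countable) : ∃ x ∈ C, ∀ t ∈ T, ¬ leStar x t := by
    obtain ⟨a, ha⟩ := exists_forall_not_leStar
      (fun _ hs => bddAbove_of_aleph_one_le_cof aleph_one_le_cof_toType hs) hσmono
      (fun ⟨b, hb, hbσ⟩ => hCunb ⟨b, hb, hσrange ▸ Set.forall_mem_range.2 hbσ⟩) hTP hT
    exact ⟨σ a, hσrange ▸ Set.mem_range_self a, ha⟩
  obtain ⟨φ, hcoh, hnontriv⟩ := exists_coherent_not_trivial (G := G) hca
    (fun f hf g hg => hmax f hf g hg) hCP (fun ξ hξ => hD₀P (Set.mem_image_of_mem D hξ))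
    (fun f hf => let ⟨_, ⟨ξ, hξ, hξf⟩, hfg⟩ := hD₀ f hf; ⟨ξ, hξ, hξf ▸ hfg⟩) hC
  simp only [eventuallyEq_cofinite_inf_principal_iff] at hcoh hnontriv
  exact ⟨φ, hcoh, hnontriv⟩

/-- base case lemma: assuming 2^ℵ₀ < 2^ℵ₁, if P ⊆ (ω^ω, ≤*) is ∨-closed
with cofinality ℵ₁ and contains an ω₁-chain C unbounded in P, and G is a nontrivial
abelian group, then there is a coherent family on P whose restriction to C is
nontrivial. -/
theorem stmt8 {G : Type*} [AddCommGroup G] [Nontrivial G]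
    (hca : (2 : Cardinal) ^ aleph0 < 2 ^ aleph 1)
    (P : Set (ℕ → ℕ)) (hmax : ∀ f ∈ P, ∀ g ∈ P, f ⊔ g ∈ P)
    (hcof₁ : ∃ D ⊆ P, (∀ f ∈ P, ∃ g ∈ D, leStar f g) ∧ #D = aleph 1)
    (hcof₂ : ∀ D ⊆ P, (∀ f ∈ P, ∃ g ∈ D, leStar f g) → aleph 1 ≤ #D)
    (C : Set (ℕ → ℕ)) (hCP : C ⊆ P)
    (σ : (aleph 1).ord.ToType → ℕ → ℕ) (hσrange : Set.range σ = C)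
    (hσmono : ∀ a b : (aleph 1).ord.ToType, a ≤ b → leStar (σ a) (σ b))
    (hσinj : Function.Injective σ)
    (hCunb : ¬ ∃ b ∈ P, ∀ f ∈ C, leStar f b) :
    ∃ φ : (ℕ → ℕ) → ℕ × ℕ → G,
      (∀ f ∈ P, ∀ g ∈ P, {p ∈ Ifun f ∩ Ifun g | φ f p ≠ φ g p}.Finite) ∧
      ¬ ∃ ψ : ℕ × ℕ → G, ∀ f ∈ C, {p ∈ Ifun f | ψ p ≠ φ f p}.Finite :=
  stmt8_general hca P hmax hcof₁ C hCP σ hσrange hσmono hCunb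
end

section
/- For directed F ⊆ ω^ω and a nontrivial abelian group G, lim^1 A^F_G ≠ 0 if and only if there exists a family ⟨φ_f : I_f → G | f ∈ F⟩ that is coherent (φ_f =* φ_g on I_f ∩ I_g for all f,g ∈ F) and nontrivial (no ψ : ω × ω → G satisfies ψ ↾ I_f =* φ_f for all f ∈ F). -/
/-- The set Λ^(n) of ≤-ordered (n+1)-tuples in Λ. -/
def RoosTuple (Λ : Type*) [Preorder Λ] (n : ℕ) : Type _ :=
  {l : Fin (n + 1) → Λ // Monotone l}

/-- K^n(G): the group of Roos n-cochains. -/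
def RoosCochain (Λ : Type*) [Preorder Λ] (G : Λ → Type*) [∀ a, AddCommGroup (G a)]
    (n : ℕ) : Type _ :=
  ∀ l : RoosTuple Λ n, G (l.1 0)

instance {Λ : Type*} [Preorder Λ] (G : Λ → Type*) [∀ a, AddCommGroup (G a)] (n : ℕ) :
    AddCommGroup (RoosCochain Λ G n) :=
  inferInstanceAs (AddCommGroup (∀ l : RoosTuple Λ n, G (l.1 0)))

/-- The tuple λ̄^i obtained by removing the i-th entry. -/
def RoosTuple.remove {Λ : Type*} [Preorder Λ] {n : ℕ} (l : RoosTuple Λ (n + 1))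
    (i : Fin (n + 2)) : RoosTuple Λ n :=
  ⟨l.1 ∘ i.succAbove, l.2.comp (Fin.strictMono_succAbove i).monotone⟩

lemma RoosTuple.remove_zero_fst {Λ : Type*} [Preorder Λ] {n : ℕ}
    (l : RoosTuple Λ (n + 1)) : (l.remove 0).1 0 = l.1 1 := by
  show l.1 ((0 : Fin (n + 2)).succAbove 0) = l.1 1
  congr 1

lemma RoosTuple.remove_succ_fst {Λ : Type*} [Preorder Λ] {n : ℕ}
    (l : RoosTuple Λ (n + 1)) (i : Fin (n + 1)) : (l.remove i.succ).1 0 = l.1 0 := by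
  show l.1 (i.succ.succAbove 0) = l.1 0
  simp [Fin.succAbove]

/-- The Roos coboundary δ : K^n → K^{n+1},
`(δ x)_λ̄ = p^{λ₁}_{λ₀}(x_{λ̄⁰}) + Σ_{1 ≤ i ≤ n+1} (-1)^i x_{λ̄^i}`. -/
def roosDelta {Λ : Type*} [Preorder Λ] (G : Λ → Type*) [∀ a, AddCommGroup (G a)]
    (p : ∀ a b : Λ, a ≤ b → (G b →+ G a)) (n : ℕ)
    (x : RoosCochain Λ G n) : RoosCochain Λ G (n + 1) := fun l =>
  p (l.1 0) (l.1 1) (l.2 (by exact Fin.zero_le 1))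
      (cast (congrArg G l.remove_zero_fst) (x (l.remove 0)))
    + ∑ i : Fin (n + 1),
        ((-1 : ℤ) ^ (i.1 + 1)) •
          cast (congrArg G (l.remove_succ_fst i)) (x (l.remove i.succ))

/-- The object of the system A^F_G at f: finitely supported functions I_f → G. -/
def Aobj (G : Type*) [AddCommGroup G] (f : ℕ → ℕ) : Type _ :=
  ((Ifun f : Set (ℕ × ℕ)) →₀ G)

noncomputable instance (G : Type*) [AddCommGroup G] (f : ℕ → ℕ) :
    AddCommGroup (Aobj G f) :=
  inferInstanceAs (AddCommGroup ((Ifun f : Set (ℕ × ℕ)) →₀ G))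

/-- The bonding projections of the system A^F_G. -/
noncomputable def Abond (G : Type*) [AddCommGroup G] (F : Set (ℕ → ℕ))
    (f g : F) (h : f ≤ g) : Aobj G g.1 →+ Aobj G f.1 :=
  Finsupp.comapDomain.addMonoidHom
    (f := fun q : (Ifun f.1 : Set (ℕ × ℕ)) => (⟨q.1, le_trans q.2 (h q.1.1)⟩ :
      (Ifun g.1 : Set (ℕ × ℕ))))
    (by
      intro q q' hqq'
      apply Subtype.ext
      have := congrArg Subtype.val hqq'
      simpa using this)

/-!
Read pointwise, a Roos 1-cocycle `X` of `A^F_G` is, at each `p ∈ ω × ω`, a cocycle with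
constant coefficients `G` on the set `{f ∈ F | p ∈ I_f}`, which is directed; there it is a
coboundary. So `X` is the coboundary `X_{fg} = φ_g - φ_f` of a family `φ` in the system
`B^F_G` of all functions `I_f → G`, and such a `φ` is coherent because the `X_{fg}` are finitely
supported. Conversely a coherent `φ` defines a cocycle of `A^F_G` in the same way. For such a
pair, `X` is a coboundary in `A^F_G`, i.e. `φ_f - Y_f` is compatible for some finitely supported
`Y_f`, exactly when the `φ_f` are almost restrictions of a single `ψ`: glue `ψ` from the
`φ_f - Y_f`.
-/

namespace RoosTuple

variable {Λ : Type*} [Preorder Λ]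

def single (a : Λ) : RoosTuple Λ 0 := ⟨fun _ => a, monotone_const⟩

def pair {a b : Λ} (hab : a ≤ b) : RoosTuple Λ 1 :=
  ⟨![a, b], Monotone.vecCons (by simp) hab⟩

def triple {a b c : Λ} (hab : a ≤ b) (hbc : b ≤ c) : RoosTuple Λ 2 :=
  ⟨![a, b, c], Monotone.vecCons (Monotone.vecCons (by simp) hbc) hab⟩

end RoosTuple

lemma cast_congrArg_apply {α : Type*} {A : α → Type*} (Y : ∀ a, A a) {a b : α} (e : a = b) :
    cast (congrArg A e) (Y a) = Y b := by
  subst e; rfl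

lemma cast_congrArg_apply₂ {α : Type*} [LE α] {A : α → Type*} (X : ∀ a b : α, a ≤ b → A a)
    {a a' b b' : α} (e : a = a') (e' : b = b') (h : a ≤ b) (h' : a' ≤ b') :
    cast (congrArg A e) (X a b h) = X a' b' h' := by
  subst e e'; rfl

namespace RoosCochain

variable {Λ : Type*} [Preorder Λ] {A : Λ → Type*} [∀ a, AddCommGroup (A a)]

def mk₀ (Y : ∀ a, A a) : RoosCochain Λ A 0 := fun l => Y (l.1 0)

def mk₁ (X : ∀ a b : Λ, a ≤ b → A a) : RoosCochain Λ A 1 := fun l => X _ _ (l.2 (Fin.zero_le 1))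

lemma mk₀_single (y : RoosCochain Λ A 0) : mk₀ (fun a => y (.single a)) = y := by
  funext ⟨v, hv⟩
  obtain ⟨a, rfl⟩ : ∃ a, v = fun _ => a := ⟨v 0, funext fun i => congrArg v (Fin.fin_one_eq_zero i)⟩
  rfl

lemma mk₁_pair (x : RoosCochain Λ A 1) : mk₁ (fun _ _ h => x (.pair h)) = x := by
  funext ⟨v, hv⟩
  obtain ⟨a, b, rfl⟩ : ∃ a b, v = ![a, b] := ⟨v 0, v 1, funext fun i => by fin_cases i <;> rfl⟩
  rfl

end RoosCochain

section RoosLowDegree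

variable {Λ : Type*} [Preorder Λ] {A : Λ → Type*} [∀ a, AddCommGroup (A a)]
  (p : ∀ a b : Λ, a ≤ b → (A b →+ A a))

def IsRoosCocycle (X : ∀ a b : Λ, a ≤ b → A a) : Prop :=
  ∀ a b c (hab : a ≤ b) (hbc : b ≤ c), X a c (hab.trans hbc) = X a b hab + p a b hab (X b c hbc)

def IsRoosCoboundary (X : ∀ a b : Λ, a ≤ b → A a) : Prop :=
  ∃ Y : ∀ a, A a, ∀ a b (hab : a ≤ b), X a b hab = p a b hab (Y b) - Y a

lemma roosDelta_zero_mk₀ (Y : ∀ a, A a) (l : RoosTuple Λ 1) :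
    roosDelta A p 0 (.mk₀ Y) l = p _ _ (l.2 (Fin.zero_le 1)) (Y (l.1 1)) - Y (l.1 0) := by
  dsimp only [roosDelta, RoosCochain.mk₀]
  rw [Fin.sum_univ_one, cast_congrArg_apply Y l.remove_zero_fst,
    cast_congrArg_apply Y (l.remove_succ_fst 0)]
  simp [sub_eq_add_neg]

lemma roosDelta_one_mk₁ (X : ∀ a b : Λ, a ≤ b → A a) (l : RoosTuple Λ 2) :
    roosDelta A p 1 (.mk₁ X) l = p _ _ (l.2 (by decide)) (X (l.1 1) (l.1 2) (l.2 (by decide)))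
      - X (l.1 0) (l.1 2) (l.2 (by decide)) + X (l.1 0) (l.1 1) (l.2 (by decide)) := by
  dsimp only [roosDelta, RoosCochain.mk₁]
  rw [Fin.sum_univ_two,
    cast_congrArg_apply₂ X l.remove_zero_fst
      (show (l.remove 0).1 1 = l.1 2 from rfl) _ (l.2 (by decide)),
    cast_congrArg_apply₂ X (l.remove_succ_fst 0)
      (show (l.remove (Fin.succ 0)).1 1 = l.1 2 from rfl) _ (l.2 (by decide)),
    cast_congrArg_apply₂ X (l.remove_succ_fst 1)
      (show (l.remove (Fin.succ 1)).1 1 = l.1 1 from rfl) _ (l.2 (by decide))]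
  simp only [Fin.val_zero, Fin.val_one, zero_add, pow_one, one_add_one_eq_two, neg_one_sq, neg_smul,
    one_smul]
  abel

lemma roosDelta_one_mk₁_eq_zero_iff (X : ∀ a b : Λ, a ≤ b → A a) :
    roosDelta A p 1 (.mk₁ X) = 0 ↔ IsRoosCocycle p X := by
  constructor
  · intro h a b c hab hbc
    have h' : roosDelta A p 1 (.mk₁ X) (.triple hab hbc) = (0 : A a) := congrFun h _
    rw [roosDelta_one_mk₁] at h'
    change p a b hab (X b c hbc) - X a c _ + X a b hab = 0 at h'
    rw [← sub_eq_zero, ← neg_eq_zero, ← h']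
    abel
  · intro hX
    funext l
    change _ = (0 : A (l.1 0))
    rw [roosDelta_one_mk₁, hX (l.1 0) (l.1 1) (l.1 2) (l.2 (by decide)) (l.2 (by decide))]
    abel

lemma roosDelta_zero_mk₀_eq_mk₁_iff (Y : ∀ a, A a) (X : ∀ a b : Λ, a ≤ b → A a) :
    roosDelta A p 0 (.mk₀ Y) = .mk₁ X ↔ ∀ a b (hab : a ≤ b), X a b hab = p a b hab (Y b) - Y a := by
  constructor
  · intro h a b hab
    exact ((roosDelta_zero_mk₀ p Y _).symm.trans (congrFun h (.pair hab))).symm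
  · intro h
    funext l
    exact (roosDelta_zero_mk₀ p Y l).trans (h _ _ _).symm

theorem exists_roosCocycle_not_roosCoboundary_iff :
    (∃ x : RoosCochain Λ A 1, roosDelta A p 1 x = 0 ∧ ¬ ∃ y, roosDelta A p 0 y = x) ↔
      ∃ X : ∀ a b : Λ, a ≤ b → A a, IsRoosCocycle p X ∧ ¬ IsRoosCoboundary p X := by
  constructor
  · rintro ⟨x, hx, hxy⟩
    rw [← x.mk₁_pair] at hx hxy
    refine ⟨_, (roosDelta_one_mk₁_eq_zero_iff p _).mp hx, fun ⟨Y, hY⟩ => hxy ⟨.mk₀ Y, ?_⟩⟩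
    exact (roosDelta_zero_mk₀_eq_mk₁_iff p Y _).mpr hY
  · rintro ⟨X, hX, hXY⟩
    refine ⟨.mk₁ X, (roosDelta_one_mk₁_eq_zero_iff p X).mpr hX, fun ⟨y, hy⟩ => hXY ?_⟩
    rw [← y.mk₀_single] at hy
    exact ⟨_, (roosDelta_zero_mk₀_eq_mk₁_iff p _ X).mp hy⟩

end RoosLowDegree

section ConstantCoefficients

variable {ι G : Type*} [Preorder ι] [AddCommGroup G] {c : ∀ a b : ι, a ≤ b → G}

lemma IsRoosCocycle.sub_eq_sub_of_le (hc : IsRoosCocycle (fun _ _ _ => AddMonoidHom.id G) c)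
    {a b H K : ι} (ha : a ≤ H) (hb : b ≤ H) (hHK : H ≤ K) :
    c a K (ha.trans hHK) - c b K (hb.trans hHK) = c a H ha - c b H hb := by
  rw [hc a H K ha hHK, hc b H K hb hHK]
  abel

theorem IsRoosCocycle.isRoosCoboundary_of_isDirectedOrder [IsDirectedOrder ι]
    (hc : IsRoosCocycle (fun _ _ _ => AddMonoidHom.id G) c) :
    IsRoosCoboundary (fun _ _ _ => AddMonoidHom.id G) c := by
  rcases isEmpty_or_nonempty ι with hι | ⟨⟨b₀⟩⟩
  · exact ⟨isEmptyElim, fun a => isEmptyElim a⟩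
  -- `c b₀ H - c a H` does not depend on the upper bound `H` of `b₀` and `a`.
  choose H hb₀H haH using fun a : ι => directed_of (· ≤ ·) b₀ a
  refine ⟨fun a => c b₀ (H a) (hb₀H a) - c a (H a) (haH a), fun a b hab => ?_⟩
  obtain ⟨K, haK, hbK⟩ := directed_of (· ≤ ·) (H a) (H b)
  dsimp only [AddMonoidHom.id_apply]
  rw [← hc.sub_eq_sub_of_le (hb₀H a) (haH a) haK,
    ← hc.sub_eq_sub_of_le (hb₀H b) (haH b) hbK, hc a b K hab ((haH b).trans hbK)]
  simp only [AddMonoidHom.id_apply]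
  abel

end ConstantCoefficients

section MonotoneFamily

variable {ι α : Type*} [Preorder ι] [IsDirectedOrder ι] {s : ι → Set α}

lemma Monotone.isDirectedOrder_mem (hs : Monotone s) (x : α) :
    IsDirectedOrder {i // x ∈ s i} where
  directed i j :=
    let ⟨k, hik, hjk⟩ := directed_of (· ≤ ·) i.1 j.1
    ⟨⟨k, hs hik i.2⟩, hik, hjk⟩

lemma exists_eqOn_of_eqOn_of_le {β : Type*} [Nonempty β] {u : ι → α → β}
    (hu : ∀ i j, i ≤ j → Set.EqOn (u j) (u i) (s i)) :
    ∃ ψ : α → β, ∀ i, Set.EqOn ψ (u i) (s i) := by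
  classical
  refine ⟨fun x => if h : ∃ i, x ∈ s i then u h.choose x else Classical.arbitrary β,
    fun i x hx => ?_⟩
  have h : ∃ i, x ∈ s i := ⟨i, hx⟩
  obtain ⟨k, hk, hik⟩ := directed_of (· ≤ ·) h.choose i
  dsimp only
  rw [dif_pos h, ← hu _ _ hk h.choose_spec, hu _ _ hik hx]

end MonotoneFamily

lemma monotone_Ifun : Monotone Ifun := fun _ _ h _ hp => hp.trans (h _)

namespace Aobj

variable {G : Type*} [AddCommGroup G] {f : ℕ → ℕ}

noncomputable def eval : Aobj G f →+ ℕ × ℕ →₀ G :=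
  Finsupp.embDomain.addMonoidHom (.subtype _)

lemma eval_apply (a : Aobj G f) (q : Ifun f) : eval a q = (show Ifun f →₀ G from a) q :=
  Finsupp.embDomain_apply_self _ _ q

lemma ext_eval {a b : Aobj G f} (h : ∀ p ∈ Ifun f, eval a p = eval b p) : a = b :=
  Finsupp.ext fun q => by rw [← eval_apply, ← eval_apply]; exact h q.1 q.2

noncomputable def ofSub (u v : ℕ × ℕ → G) (huv : {p ∈ Ifun f | u p ≠ v p}.Finite) : Aobj G f :=
  Finsupp.ofSupportFinite (fun q : Ifun f => u q - v q) <|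
    (huv.preimage Subtype.val_injective.injOn).subset fun q hq => ⟨q.2, sub_ne_zero.mp hq⟩

lemma eval_ofSub {u v : ℕ × ℕ → G} (huv : {p ∈ Ifun f | u p ≠ v p}.Finite) {p : ℕ × ℕ}
    (hp : p ∈ Ifun f) : eval (ofSub u v huv) p = u p - v p :=
  eval_apply _ ⟨p, hp⟩

end Aobj

lemma Aobj.eval_Abond {G : Type*} [AddCommGroup G] {F : Set (ℕ → ℕ)} {f g : F} (hfg : f ≤ g)
    (a : Aobj G g.1) {p : ℕ × ℕ} (hp : p ∈ Ifun f.1) :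
    eval (Abond G F f g hfg a) p = eval a p := by
  rw [eval_apply _ ⟨p, hp⟩, eval_apply _ ⟨p, monotone_Ifun hfg hp⟩]
  rfl

section ProductSystem

variable {G : Type*} [AddCommGroup G] {F : Set (ℕ → ℕ)} {X : ∀ f g : F, f ≤ g → Aobj G f.1}
  {φ : (ℕ → ℕ) → ℕ × ℕ → G}

/-- `φ` trivializes `X` in the system `B^F_G` of all functions `I_f → G`. -/
def IsFullCoboundary (X : ∀ f g : F, f ≤ g → Aobj G f.1) (φ : (ℕ → ℕ) → ℕ × ℕ → G) : Prop :=
  ∀ f g (hfg : f ≤ g), ∀ p ∈ Ifun f.1, Aobj.eval (X f g hfg) p = φ g p - φ f p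

theorem IsRoosCocycle.exists_isFullCoboundary (hdir : DirectedOn (· ≤ ·) F)
    (hX : IsRoosCocycle (Abond G F) X) :
    ∃ φ, IsFullCoboundary X φ := by
  classical
  have hXp (p : ℕ × ℕ) : IsRoosCocycle (fun _ _ _ => AddMonoidHom.id G)
      fun (a b : {f : F // p ∈ Ifun f.1}) hab => Aobj.eval (X a.1 b.1 hab) p := by
    intro a b c hab hbc
    dsimp only
    rw [hX a.1 b.1 c.1 hab hbc, map_add, Finsupp.add_apply, Aobj.eval_Abond _ _ a.2]
    rfl
  have := hdir.isDirectedOrder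
  have (p : ℕ × ℕ) : IsDirectedOrder {f : F // p ∈ Ifun f.1} :=
    (monotone_Ifun.comp (Subtype.mono_coe _)).isDirectedOrder_mem p
  choose y hy using fun p => (hXp p).isRoosCoboundary_of_isDirectedOrder
  refine ⟨fun f p => if h : f ∈ F ∧ p ∈ Ifun f then y p ⟨⟨f, h.1⟩, h.2⟩ else 0,
    fun f g hfg p hp => ?_⟩
  dsimp only
  rw [dif_pos ⟨g.2, monotone_Ifun hfg hp⟩, dif_pos ⟨f.2, hp⟩]
  exact hy p ⟨f, hp⟩ ⟨g, monotone_Ifun hfg hp⟩ hfg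

lemma IsFullCoboundary.finite_ne (hdir : DirectedOn (· ≤ ·) F) (hXφ : IsFullCoboundary X φ) :
    ∀ f ∈ F, ∀ g ∈ F, {p ∈ Ifun f ∩ Ifun g | φ f p ≠ φ g p}.Finite := by
  intro f hf g hg
  obtain ⟨h, hh, hfh, hgh⟩ := hdir f hf g hg
  refine (Set.Finite.union (Aobj.eval (X ⟨f, hf⟩ ⟨h, hh⟩ hfh)).hasFiniteSupport
    (Aobj.eval (X ⟨g, hg⟩ ⟨h, hh⟩ hgh)).hasFiniteSupport).subset ?_
  rintro p ⟨⟨hpf, hpg⟩, hne⟩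
  rw [Set.mem_union, Function.mem_support, Function.mem_support, hXφ _ _ _ p hpf,
    hXφ _ _ _ p hpg, sub_ne_zero, sub_ne_zero]
  by_contra! h
  exact hne (h.1.symm.trans h.2)

lemma exists_isRoosCocycle_isFullCoboundary
    (hφ : ∀ f ∈ F, ∀ g ∈ F, {p ∈ Ifun f ∩ Ifun g | φ f p ≠ φ g p}.Finite) :
    ∃ X : ∀ f g : F, f ≤ g → Aobj G f.1, IsRoosCocycle (Abond G F) X ∧ IsFullCoboundary X φ := by
  have hfin (f g : F) (hfg : f ≤ g) : {p ∈ Ifun f.1 | φ g p ≠ φ f p}.Finite :=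
    (hφ f f.2 g g.2).subset fun p ⟨hp, hne⟩ => ⟨⟨hp, monotone_Ifun hfg hp⟩, hne.symm⟩
  refine ⟨fun f g hfg => .ofSub _ _ (hfin f g hfg), fun f g k hfg hgk => ?_,
    fun f g hfg p hp => Aobj.eval_ofSub _ hp⟩
  refine Aobj.ext_eval fun p hp => ?_
  rw [map_add, Finsupp.add_apply, Aobj.eval_Abond _ _ hp, Aobj.eval_ofSub _ hp,
    Aobj.eval_ofSub _ hp, Aobj.eval_ofSub _ (monotone_Ifun hfg hp)]
  abel

theorem IsFullCoboundary.isRoosCoboundary_iff (hdir : DirectedOn (· ≤ ·) F)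
    (hXφ : IsFullCoboundary X φ) :
    IsRoosCoboundary (Abond G F) X ↔
      ∃ ψ : ℕ × ℕ → G, ∀ f ∈ F, {p ∈ Ifun f | ψ p ≠ φ f p}.Finite := by
  constructor
  · rintro ⟨Y, hY⟩
    have := hdir.isDirectedOrder
    obtain ⟨ψ, hψ⟩ := exists_eqOn_of_eqOn_of_le (s := fun f : F => Ifun f.1)
      (u := fun f p => φ f p - Aobj.eval (Y f) p) fun f g hfg p hp => by
        have := congrArg (Aobj.eval · p) (hY f g hfg)
        simp only [hXφ f g hfg p hp, map_sub, Finsupp.sub_apply, Aobj.eval_Abond _ _ hp] at this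
        exact sub_eq_sub_iff_sub_eq_sub.mp this
    refine ⟨ψ, fun f hf => (Aobj.eval (Y ⟨f, hf⟩)).hasFiniteSupport.subset ?_⟩
    rintro p ⟨hp, hne⟩
    rw [hψ ⟨f, hf⟩ hp] at hne
    exact fun h => hne (by simp only [h, sub_zero])
  · rintro ⟨ψ, hψ⟩
    refine ⟨fun f => .ofSub (φ f) ψ (by simpa only [ne_comm] using hψ f f.2), fun f g hfg => ?_⟩
    refine Aobj.ext_eval fun p hp => ?_
    rw [hXφ f g hfg p hp, map_sub, Finsupp.sub_apply, Aobj.eval_Abond _ _ hp,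
      Aobj.eval_ofSub _ hp, Aobj.eval_ofSub _ (monotone_Ifun hfg hp)]
    abel

end ProductSystem

theorem stmt14_general {G : Type*} [AddCommGroup G]
    (F : Set (ℕ → ℕ)) (hdir : DirectedOn (· ≤ ·) F) :
    (∃ x : RoosCochain F (fun f => Aobj G f.1) 1,
        roosDelta (fun f : F => Aobj G f.1) (Abond G F) 1 x = 0 ∧
        ¬ ∃ y : RoosCochain F (fun f => Aobj G f.1) 0,
            roosDelta (fun f : F => Aobj G f.1) (Abond G F) 0 y = x) ↔
    (∃ φ : (ℕ → ℕ) → ℕ × ℕ → G,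
        (∀ f ∈ F, ∀ g ∈ F, {p ∈ Ifun f ∩ Ifun g | φ f p ≠ φ g p}.Finite) ∧
        ¬ ∃ ψ : ℕ × ℕ → G, ∀ f ∈ F, {p ∈ Ifun f | ψ p ≠ φ f p}.Finite) := by
  rw [exists_roosCocycle_not_roosCoboundary_iff]
  constructor
  · rintro ⟨X, hX, hXnt⟩
    obtain ⟨φ, hXφ⟩ := hX.exists_isFullCoboundary hdir
    exact ⟨φ, hXφ.finite_ne hdir, (hXφ.isRoosCoboundary_iff hdir).not.mp hXnt⟩
  · rintro ⟨φ, hφ, hφnt⟩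
    obtain ⟨X, hX, hXφ⟩ := exists_isRoosCocycle_isFullCoboundary hφ
    exact ⟨X, hX, (hXφ.isRoosCoboundary_iff hdir).not.mpr hφnt⟩

/-- for directed F ⊆ ω^ω and a nontrivial abelian group G,
lim¹ A^F_G ≠ 0 (expressed via the Roos complex: there is a 1-cocycle that is not a
coboundary) iff there is a coherent nontrivial family ⟨φ_f : I_f → G | f ∈ F⟩. -/
theorem stmt14 {G : Type*} [AddCommGroup G] [Nontrivial G]
    (F : Set (ℕ → ℕ)) (hdir : DirectedOn (· ≤ ·) F) :
    (∃ x : RoosCochain F (fun f => Aobj G f.1) 1,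
        roosDelta (fun f : F => Aobj G f.1) (Abond G F) 1 x = 0 ∧
        ¬ ∃ y : RoosCochain F (fun f => Aobj G f.1) 0,
            roosDelta (fun f : F => Aobj G f.1) (Abond G F) 0 y = x) ↔
    (∃ φ : (ℕ → ℕ) → ℕ × ℕ → G,
        (∀ f ∈ F, ∀ g ∈ F, {p ∈ Ifun f ∩ Ifun g | φ f p ≠ φ g p}.Finite) ∧
        ¬ ∃ ψ : ℕ × ℕ → G, ∀ f ∈ F, {p ∈ Ifun f | ψ p ≠ φ f p}.Finite) :=
  stmt14_general F hdir
end
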